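/- arXiv:1804.05431 — 7 statements merged into one kernel-verified Lean document; each statement's English description precedes it below -/
import Mathlib

section
/- Let k ≥ 1 be an integer, let C₁, C₂, …, C_k be nonnegative integers with C₁ = max_{1 ≤ i ≤ k} C_i, let N be a nonnegative integer, and let A₁, A₂, …, A_k be nonnegative integers with A₁ + A₂ + … + A_k = N. Then ∏_{i=1}^k (A_i + C_i)! ≤ (N + C₁)! · ∏_{i=2}^k C_i!. -/
/-!
Since `(a + c)! / c! = (c + 1)⋯(c + a)` is monotone in `c`, for `C_i ≤ d` we have
`(A_i + C_i)! * d! ≤ (A_i + d)! * C_i!`: one index at a time, the factor `(A_i + C_i)!` is traded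
for `C_i!` while `A_i` is moved onto the first index, whose `C` is the largest.
-/

open Nat Finset

theorem factorial_add_mul_factorial_le (a : ℕ) {c d : ℕ} (h : c ≤ d) :
    (a + c)! * d ! ≤ (a + d)! * c ! := by
  rw [add_comm a c, add_comm a d, ← factorial_mul_ascFactorial, ← factorial_mul_ascFactorial]
  calc c ! * (c + 1).ascFactorial a * d !
      = c ! * d ! * (c + 1).ascFactorial a := by ring
    _ ≤ c ! * d ! * (d + 1).ascFactorial a := by gcongr
    _ = d ! * (d + 1).ascFactorial a * c ! := by ring

theorem factorial_add_mul_prod_factorial_add_le {ι : Type*} (A C : ι → ℕ) (n m : ℕ)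
    (s : Finset ι) (hC : ∀ i ∈ s, C i ≤ m) :
    (n + m)! * ∏ i ∈ s, (A i + C i)! ≤ (n + ∑ i ∈ s, A i + m)! * ∏ i ∈ s, (C i)! := by
  induction s using Finset.cons_induction with
  | empty => simp
  | cons x t hx ih =>
    rw [forall_mem_cons] at hC
    set M := n + ∑ i ∈ t, A i + m
    have hxM : C x ≤ M := hC.1.trans (Nat.le_add_left m _)
    rw [prod_cons, prod_cons, sum_cons,
      show n + (A x + ∑ i ∈ t, A i) + m = A x + M by simp only [M]; ring]
    calc (n + m)! * ((A x + C x)! * ∏ i ∈ t, (A i + C i)!)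
        = (A x + C x)! * ((n + m)! * ∏ i ∈ t, (A i + C i)!) := by ring
      _ ≤ (A x + C x)! * (M ! * ∏ i ∈ t, (C i)!) := Nat.mul_le_mul_left _ (ih hC.2)
      _ = (A x + C x)! * M ! * ∏ i ∈ t, (C i)! := by ring
      _ ≤ (A x + M)! * (C x)! * ∏ i ∈ t, (C i)! :=
        Nat.mul_le_mul_right _ (factorial_add_mul_factorial_le _ hxM)
      _ = (A x + M)! * ((C x)! * ∏ i ∈ t, (C i)!) := by ring

/-- Let `k ≥ 1`, let `C₁, …, C_k` be nonnegative integers with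
`C₁ = max_i C_i`, and let `A₁, …, A_k` be nonnegative integers with `Σ A_i = N`.
Then `∏_{i=1}^k (A_i + C_i)! ≤ (N + C₁)! · ∏_{i=2}^k C_i!`. -/
theorem prod_add_factorial_le (k : ℕ) (hk : 1 ≤ k) (C A : Fin k → ℕ) (N : ℕ)
    (hC : ∀ i, C i ≤ C ⟨0, hk⟩) (hA : ∑ i, A i = N) :
    ∏ i, (A i + C i)! ≤ (N + C ⟨0, hk⟩)! * ∏ i ∈ Finset.univ.erase ⟨0, hk⟩, (C i)! := by
  set j : Fin k := ⟨0, hk⟩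
  rw [← mul_prod_erase univ _ (mem_univ j), ← hA, ← add_sum_erase univ A (mem_univ j)]
  exact factorial_add_mul_prod_factorial_add_le A C (A j) (C j) _ fun i _ => hC i
end

section
/- Let k ≥ 2 be an integer, let C₁, C₂, …, C_k be nonnegative integers with C₁ = max_{1 ≤ i ≤ k} C_i and C₂ = max_{2 ≤ i ≤ k} C_i, let N be a nonnegative integer, and let A₁, A₂, …, A_k be nonnegative integers with A₁ + A₂ + … + A_k = N such that at least two of the A_i are positive. Then ∏_{i=1}^k (A_i + C_i)! ≤ (N + C₁ − 1)! · (C₂ + 1)! · ∏_{i=3}^k C_i!. -/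
/-!
For `w ≤ u`, moving `d` units from the argument of the smaller factorial to the larger one can
only increase `u! · (w + d)!`, since `(w + d)! / w! ≤ (u + d)! / u!`. In the 1-based indexing
of the statement: pick `p ≠ 1` with `A_p > 0`, which exists as two `A_i` are positive. Shifting
every `A_i` with `i ≠ 1, p` into slot `1`, whose `C₁` is the largest, and then all but one unit
of `A_p` as well, gives `(N + C₁ - 1)! · (C_p + 1)! · ∏_{i ≠ 1, p} C_i!`. This equals
`(N + C₁ - 1)! · (C_p + 1) · ∏_{i ≠ 1} C_i!`, and `C_p ≤ C₂` finishes.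
-/

open Nat Finset

namespace Nat

theorem factorial_mul_factorial_add_le {u w : ℕ} (d : ℕ) (h : w ≤ u) :
    u ! * (w + d)! ≤ (u + d)! * w ! := by
  rw [← factorial_mul_ascFactorial w d, ← factorial_mul_ascFactorial u d]
  calc u ! * (w ! * (w + 1).ascFactorial d) = u ! * w ! * (w + 1).ascFactorial d := by ring
    _ ≤ u ! * w ! * (u + 1).ascFactorial d := by gcongr
    _ = u ! * (u + 1).ascFactorial d * w ! := by ring

theorem factorial_mul_prod_factorial_add_le {ι : Type*} (s : Finset ι) (A C : ι → ℕ) {a : ℕ}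
    (hC : ∀ i ∈ s, C i ≤ a) :
    a ! * ∏ i ∈ s, (A i + C i)! ≤ (a + ∑ i ∈ s, A i)! * ∏ i ∈ s, (C i)! := by
  induction s using Finset.cons_induction generalizing a with
  | empty => simp
  | cons j t _ ih =>
    rw [forall_mem_cons] at hC
    rw [prod_cons, prod_cons, sum_cons, ← add_assoc]
    calc a ! * ((A j + C j)! * ∏ i ∈ t, (A i + C i)!)
        = a ! * (C j + A j)! * ∏ i ∈ t, (A i + C i)! := by rw [add_comm (A j)]; ring
      _ ≤ (a + A j)! * (C j)! * ∏ i ∈ t, (A i + C i)! :=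
          Nat.mul_le_mul_right _ (factorial_mul_factorial_add_le _ hC.1)
      _ = (C j)! * ((a + A j)! * ∏ i ∈ t, (A i + C i)!) := by ring
      _ ≤ (C j)! * ((a + A j + ∑ i ∈ t, A i)! * ∏ i ∈ t, (C i)!) :=
          Nat.mul_le_mul_left _ (ih fun i hi => (hC.2 i hi).trans (le_add_right a (A j)))
      _ = _ := by ring

theorem factorial_succ_mul_prod_erase {ι : Type*} [DecidableEq ι] {s : Finset ι} {p : ι}
    (f : ι → ℕ) (hp : p ∈ s) :
    (f p + 1)! * ∏ i ∈ s.erase p, (f i)! = (f p + 1) * ∏ i ∈ s, (f i)! := by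
  rw [factorial_succ, mul_assoc, mul_prod_erase s (fun i => (f i)!) hp]

theorem prod_factorial_add_le_of_pos_lt_sum {ι : Type*} [Fintype ι] [DecidableEq ι]
    (A C : ι → ℕ) {i₀ p : ι} (hp : p ≠ i₀) (hC : ∀ i, C i ≤ C i₀) (hAp : 0 < A p)
    (hlt : A p < ∑ i, A i) :
    ∏ i, (A i + C i)! ≤
      (∑ i, A i + C i₀ - 1)! * (C p + 1)! * ∏ i ∈ (univ.erase i₀).erase p, (C i)! := by
  set t := (univ.erase i₀).erase p
  have hp_mem : p ∈ univ.erase i₀ := mem_erase.2 ⟨hp, mem_univ p⟩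
  have hprod : ∏ i, (A i + C i)! = (A i₀ + C i₀)! * ((A p + C p)! * ∏ i ∈ t, (A i + C i)!) := by
    rw [← mul_prod_erase _ _ (mem_univ i₀), ← mul_prod_erase _ _ hp_mem]
  have hsum : A i₀ + (A p + ∑ i ∈ t, A i) = ∑ i, A i := by
    rw [add_sum_erase _ _ hp_mem, add_sum_erase _ _ (mem_univ i₀)]
  have merge := factorial_mul_prod_factorial_add_le t A C (a := A i₀ + C i₀)
    fun i _ => (hC i).trans le_add_self
  set u := A i₀ + C i₀ + ∑ i ∈ t, A i
  have split_off : u ! * (A p + C p)! ≤ (∑ i, A i + C i₀ - 1)! * (C p + 1)! := by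
    have hCp := hC p
    have := factorial_mul_factorial_add_le (A p - 1) (show C p + 1 ≤ u by omega)
    rwa [show C p + 1 + (A p - 1) = A p + C p by omega,
      show u + (A p - 1) = ∑ i, A i + C i₀ - 1 by omega] at this
  calc ∏ i, (A i + C i)! = (A i₀ + C i₀)! * (∏ i ∈ t, (A i + C i)!) * (A p + C p)! := by
        rw [hprod]; ring
    _ ≤ u ! * (∏ i ∈ t, (C i)!) * (A p + C p)! := Nat.mul_le_mul_right _ merge
    _ = u ! * (A p + C p)! * ∏ i ∈ t, (C i)! := by ring
    _ ≤ _ := Nat.mul_le_mul_right _ split_off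

end Nat

theorem Finset.exists_ne_pos_lt_sum {ι : Type*} [Fintype ι] {A : ι → ℕ} (i₀ : ι)
    (htwo : ∃ i j, i ≠ j ∧ 0 < A i ∧ 0 < A j) : ∃ p ≠ i₀, 0 < A p ∧ A p < ∑ i, A i := by
  classical
  have lt_sum {p q : ι} (hpq : p ≠ q) (hq : 0 < A q) : A p < ∑ i, A i :=
    calc A p < A p + A q := by omega
      _ = ∑ i ∈ {p, q}, A i := (sum_pair hpq).symm
      _ ≤ ∑ i, A i := sum_le_univ_sum_of_nonneg fun _ => Nat.zero_le _
  obtain ⟨i, j, hij, hi, hj⟩ := htwo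
  by_cases hi₀ : i = i₀
  · exact ⟨j, hi₀ ▸ hij.symm, hj, lt_sum hij.symm hi⟩
  · exact ⟨i, hi₀, hi, lt_sum hij hj⟩

/-- Let `k ≥ 2`, let `C₁, …, C_k` be nonnegative integers with
`C₁ = max_{1 ≤ i ≤ k} C_i` and `C₂ = max_{2 ≤ i ≤ k} C_i`, and let `A₁, …, A_k` be
nonnegative integers with `Σ A_i = N`, at least two of which are positive.
Then `∏_{i=1}^k (A_i + C_i)! ≤ (N + C₁ − 1)! · (C₂ + 1)! · ∏_{i=3}^k C_i!`. -/
theorem prod_add_factorial_le_of_two_pos (k : ℕ) (hk : 2 ≤ k) (C A : Fin k → ℕ) (N : ℕ)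
    (hC1 : ∀ i, C i ≤ C ⟨0, by omega⟩)
    (hC2 : ∀ i : Fin k, i ≠ ⟨0, by omega⟩ → C i ≤ C ⟨1, by omega⟩)
    (hA : ∑ i, A i = N)
    (htwo : ∃ i j : Fin k, i ≠ j ∧ 0 < A i ∧ 0 < A j) :
    ∏ i, (A i + C i)! ≤
      (N + C ⟨0, by omega⟩ - 1)! * (C ⟨1, by omega⟩ + 1)! *
        ∏ i ∈ (Finset.univ.erase ⟨0, by omega⟩).erase ⟨1, by omega⟩, (C i)! := by
  set i₀ : Fin k := ⟨0, by omega⟩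
  set i₁ : Fin k := ⟨1, by omega⟩
  obtain ⟨p, hp, hAp, hlt⟩ := exists_ne_pos_lt_sum i₀ htwo
  have mem_erase_i₀ {i : Fin k} (hi : i ≠ i₀) : i ∈ univ.erase i₀ := mem_erase.2 ⟨hi, mem_univ i⟩
  have hi₁ : i₁ ≠ i₀ := by simp [i₀, i₁, Fin.ext_iff]
  calc ∏ i, (A i + C i)!
      ≤ (N + C i₀ - 1)! * (C p + 1)! * ∏ i ∈ (univ.erase i₀).erase p, (C i)! :=
        hA ▸ prod_factorial_add_le_of_pos_lt_sum A C hp hC1 hAp hlt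
    _ = (N + C i₀ - 1)! * ((C p + 1) * ∏ i ∈ univ.erase i₀, (C i)!) := by
        rw [mul_assoc, factorial_succ_mul_prod_erase C (mem_erase_i₀ hp)]
    _ ≤ (N + C i₀ - 1)! * ((C i₁ + 1) * ∏ i ∈ univ.erase i₀, (C i)!) := by
        gcongr; exact hC2 p hp
    _ = _ := by rw [← factorial_succ_mul_prod_erase C (mem_erase_i₀ hi₁), mul_assoc]
end

section
/- Let k ≥ 2 be an integer and let A₁, A₂, …, A_k be positive even integers with A₁ + A₂ + … + A_k = N (so N is even), such that at least two of the A_i are greater than or equal to 4. Then ∏_{i=1}^k (2A_i − 3)!! ≤ 15 · (2N − 4k − 3)!!. -/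
/-!
Write `A i = b i + 2`, so that `(2 A i - 3)‼ = (2 b i + 1)‼` and `2N - 4k - 3 = 2 ∑ b - 3`.
Then `(2m + 1)‼ (2n + 1)‼ ≤ (2(m + n) + 1)‼`, because the factors `3, …, 2n + 1` of the second
are dominated by the factors `2m + 3, …, 2(m + n) + 1` extending the first; the same holds with a
common head `(2c + 1)‼` kept out of both. With `c = 0` this merges all factors but one, and with
`c = 2` the last merge costs `5‼ = 15`.
-/

open Nat Finset
open scoped Nat

namespace Nat

theorem doubleFactorial_two_mul_add_one_mul_le (a b c : ℕ) :
    (2 * (a + c) + 1)‼ * (2 * (b + c) + 1)‼ ≤ (2 * c + 1)‼ * (2 * (a + b + c) + 1)‼ := by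
  induction b with
  | zero => simp [mul_comm]
  | succ b ih =>
    have hb : 2 * (b + 1 + c) + 1 = 2 * (b + c) + 1 + 2 := by ring
    have hab : 2 * (a + (b + 1) + c) + 1 = 2 * (a + b + c) + 1 + 2 := by ring
    rw [hb, hab, doubleFactorial_add_two, doubleFactorial_add_two]
    calc (2 * (a + c) + 1)‼ * ((2 * (b + c) + 1 + 2) * (2 * (b + c) + 1)‼)
        = (2 * (b + c) + 3) * ((2 * (a + c) + 1)‼ * (2 * (b + c) + 1)‼) := by ring
      _ ≤ (2 * (a + b + c) + 3) * ((2 * c + 1)‼ * (2 * (a + b + c) + 1)‼) := by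
        gcongr; omega
      _ = _ := by ring

theorem prod_doubleFactorial_two_mul_add_one_le {ι : Type*} (s : Finset ι) (b : ι → ℕ) :
    ∏ i ∈ s, (2 * b i + 1)‼ ≤ (2 * ∑ i ∈ s, b i + 1)‼ := by
  classical
  induction s using Finset.induction with
  | empty => simp
  | insert a s ha ih =>
    rw [prod_insert ha, sum_insert ha]
    calc (2 * b a + 1)‼ * ∏ i ∈ s, (2 * b i + 1)‼
        ≤ (2 * (b a + 0) + 1)‼ * (2 * ((∑ i ∈ s, b i) + 0) + 1)‼ := by
          simpa using Nat.mul_le_mul_left _ ih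
      _ ≤ (2 * (b a + ∑ i ∈ s, b i) + 1)‼ := by
          simpa using doubleFactorial_two_mul_add_one_mul_le (b a) (∑ i ∈ s, b i) 0

theorem prod_doubleFactorial_two_mul_add_one_le_of_two_le {ι : Type*} [DecidableEq ι]
    {s : Finset ι} {b : ι → ℕ} {i j : ι} (hi : i ∈ s) (hj : j ∈ s) (hij : i ≠ j)
    (hbi : 2 ≤ b i) (hbj : 2 ≤ b j) :
    ∏ l ∈ s, (2 * b l + 1)‼ ≤ 15 * (2 * ∑ l ∈ s, b l - 3)‼ := by
  have hj' : j ∈ s.erase i := mem_erase.2 ⟨hij.symm, hj⟩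
  set B := ∑ l ∈ s.erase i, b l
  have hB : 2 ≤ B := hbj.trans (single_le_sum (fun _ _ ↦ Nat.zero_le _) hj')
  rw [← mul_prod_erase s _ hi, ← add_sum_erase s _ hi]
  calc (2 * b i + 1)‼ * ∏ l ∈ s.erase i, (2 * b l + 1)‼
      ≤ (2 * (b i - 2 + 2) + 1)‼ * (2 * (B - 2 + 2) + 1)‼ := by
        rw [Nat.sub_add_cancel hbi, Nat.sub_add_cancel hB]
        exact Nat.mul_le_mul_left _ (prod_doubleFactorial_two_mul_add_one_le _ _)
    _ ≤ (2 * 2 + 1)‼ * (2 * (b i - 2 + (B - 2) + 2) + 1)‼ :=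
        doubleFactorial_two_mul_add_one_mul_le _ _ _
    _ = 15 * (2 * (b i + B) - 3)‼ := by
        congr 2; omega

end Nat

theorem prod_doubleFactorial_le_general (k N : ℕ) (A : Fin k → ℕ)
    (hpos : ∀ i, 0 < A i) (heven : ∀ i, Even (A i)) (hA : ∑ i, A i = N)
    (htwo : ∃ i j : Fin k, i ≠ j ∧ 4 ≤ A i ∧ 4 ≤ A j) :
    ∏ i, (2 * A i - 3)‼ ≤ 15 * (2 * N - 4 * k - 3)‼ := by
  obtain ⟨i, j, hij, hi, hj⟩ := htwo
  have two_le : ∀ l, 2 ≤ A l := fun l ↦ by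
    obtain ⟨r, hr⟩ := heven l
    have := hpos l
    omega
  have hsum : ∑ l, (A l - 2) = N - 2 * k := by
    rw [sum_tsub_distrib _ fun l _ ↦ two_le l, hA]
    simp [mul_comm]
  have key := Nat.prod_doubleFactorial_two_mul_add_one_le_of_two_le (b := fun l ↦ A l - 2)
    (mem_univ i) (mem_univ j) hij (by omega) (by omega)
  rw [hsum] at key
  convert key using 3 with l
  · have := two_le l
    omega
  · omega

/-- Let `k ≥ 2` and let `A₁, …, A_k` be positive even integers with
`Σ A_i = N`, at least two of which are `≥ 4`. Then
`∏_{i=1}^k (2A_i − 3)!! ≤ 15 · (2N − 4k − 3)!!`. -/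
theorem prod_doubleFactorial_le (k N : ℕ) (hk : 2 ≤ k) (A : Fin k → ℕ)
    (hpos : ∀ i, 0 < A i) (heven : ∀ i, Even (A i)) (hA : ∑ i, A i = N)
    (htwo : ∃ i j : Fin k, i ≠ j ∧ 4 ≤ A i ∧ 4 ≤ A j) :
    ∏ i, (2 * A i - 3)‼ ≤ 15 * (2 * N - 4 * k - 3)‼ :=
  prod_doubleFactorial_le_general k N A hpos heven hA htwo
end

section
/- Let L ≥ a ≥ 0 and b ≥ 0 be integers with L positive. Then Σ_{A ∈ C_L(L−a+1)} Σ_{B ∈ G_b(L−a+1)} ∏_{i=1}^{L−a+1} (A_i + 2B_i)! / (A_i! · B_i!) ≤ 2^{9L+5} · (a + 2b)! / (a! · b!). -/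
open Nat Finset

/-- `compositions n k` is the set `C_n(k)` of compositions of `n` of length `k`:
ordered `k`-tuples of positive integers summing to `n`. -/
def compositions (n k : ℕ) : Finset (Fin k → ℕ) :=
  (Finset.Nat.antidiagonalTuple k n).filter fun f => ∀ i, 0 < f i

/-- `weakCompositions n k` is the set `G_n(k)` of ordered `k`-tuples of nonnegative
integers summing to `n`. -/
def weakCompositions (n k : ℕ) : Finset (Fin k → ℕ) :=
  Finset.Nat.antidiagonalTuple k n

/-!
Write `g(A, B) = (A + 2B)! / (A! B!)`. After clearing factorials, the merging inequality
`g(k + 1, B) g(A, C) ≤ (2B + 1)/2^B · g(k + A, B + C)` for `B ≤ C` is a binomial inequality that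
follows from two terms of Vandermonde's identity and `2^B ≤ C(B + C, B)`. Summed over `B + C = b`,
using `∑ (2j + 1)/2^j = 6`, it merges two parts of a composition at the cost of a factor `12`, so by
induction on the number of parts the inner sum for a fixed composition `A` of `L` into `L - a + 1`
parts is at most `12^(L - a + 1) g(a, b)`. By stars and bars there are at most `2^(2L + 1)` such
compositions, which leaves ample room in `2^(9L + 5)`.
-/

namespace Nat

theorem two_pow_le_centralBinom (n : ℕ) : 2 ^ n ≤ centralBinom n := by
  induction n with
  | zero => simp
  | succ n ih =>
    have : (n + 1) * (2 * 2 ^ n) ≤ (n + 1) * centralBinom (n + 1) := by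
      rw [succ_mul_centralBinom_succ]; nlinarith
    rw [pow_succ, mul_comm _ 2]
    exact Nat.le_of_mul_le_mul_left this (by omega)

theorem two_pow_le_choose {n k : ℕ} (h : 2 * k ≤ n) : 2 ^ k ≤ n.choose k :=
  (two_pow_le_centralBinom k).trans <|
    (centralBinom_eq_two_mul_choose k).trans_le (choose_le_choose k h)

theorem choose_mul_choose_le_add_choose (m n i j : ℕ) :
    m.choose i * n.choose j ≤ (m + n).choose (i + j) := by
  rw [add_choose_eq]
  exact single_le_sum (f := fun p : ℕ × ℕ => m.choose p.1 * n.choose p.2)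
    (a := (i, j)) (fun _ _ => Nat.zero_le _) (HasAntidiagonal.mem_antidiagonal.mpr rfl)

theorem choose_mul_two_pow_le_choose_two_mul {n k : ℕ} (h : 2 * k ≤ n) :
    n.choose k * 2 ^ k ≤ (2 * n).choose (2 * k) := by
  calc n.choose k * 2 ^ k ≤ n.choose k * n.choose k := Nat.mul_le_mul_left _ (two_pow_le_choose h)
    _ ≤ (n + n).choose (k + k) := choose_mul_choose_le_add_choose n n k k
    _ = (2 * n).choose (2 * k) := by rw [two_mul, two_mul]

theorem choose_succ_le_mul_choose (n k : ℕ) : n.choose (k + 1) ≤ n * n.choose k :=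
  calc n.choose (k + 1) ≤ n.choose (k + 1) * (k + 1) := Nat.le_mul_of_pos_right _ k.succ_pos
    _ = n.choose k * (n - k) := choose_succ_right_eq n k
    _ ≤ n * n.choose k := by rw [mul_comm]; exact Nat.mul_le_mul_right _ (Nat.sub_le n k)

theorem choose_mul_choose_add_choose_mul_choose_le (m n i j : ℕ) :
    m.choose (i + 1) * n.choose j + m.choose i * n.choose (j + 1) ≤ (m + n).choose (i + j + 1) := by
  have hne : (i + 1, j) ≠ (i, j + 1) := by simp
  rw [add_choose_eq, ← sum_pair hne (f := fun p : ℕ × ℕ => m.choose p.1 * n.choose p.2)]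
  refine sum_le_sum_of_subset_of_nonneg ?_ fun _ _ _ => Nat.zero_le _
  intro p hp
  simp only [mem_insert, mem_singleton] at hp
  rcases hp with rfl | rfl <;> simp only [HasAntidiagonal.mem_antidiagonal] <;> omega

/-- Split `N + 2b = (N + 2B) + 2(b - B)`: the first part is absorbed by `N (2B + 1)`, the second
is rewritten with `C(2b, 2B) · 2(b - B) = C(2b, 2B + 1) (2B + 1)` and `C(N, k + 1) ≤ N C(N, k)`,
and the two resulting terms are two terms of Vandermonde's sum for `C(N + 2b, k + 1 + 2B)`. -/
theorem choose_succ_mul_choose_two_mul_mul_le (N k B b : ℕ) (hN : 0 < N) (hB : B ≤ b) :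
    N.choose (k + 1) * (2 * b).choose (2 * B) * (N + 2 * b) ≤
      N * (2 * B + 1) * (N + 2 * b).choose (k + 1 + 2 * B) := by
  have hup : (2 * b).choose (2 * B + 1) * (2 * B + 1) = (2 * b).choose (2 * B) * (2 * (b - B)) := by
    rw [choose_succ_right_eq]; congr 1; omega
  have hdown := choose_succ_le_mul_choose N k
  have hvdm := choose_mul_choose_add_choose_mul_choose_le N (2 * b) k (2 * B)
  have hcoef : N + 2 * B ≤ N * (2 * B + 1) := by nlinarith
  calc N.choose (k + 1) * (2 * b).choose (2 * B) * (N + 2 * b)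
      = N.choose (k + 1) * (2 * b).choose (2 * B) * (N + 2 * B)
        + N.choose (k + 1) * ((2 * b).choose (2 * B + 1) * (2 * B + 1)) := by
        rw [hup, show N + 2 * b = N + 2 * B + 2 * (b - B) by omega]; ring
    _ ≤ N.choose (k + 1) * (2 * b).choose (2 * B) * (N * (2 * B + 1))
        + N * N.choose k * ((2 * b).choose (2 * B + 1) * (2 * B + 1)) := by gcongr
    _ = N * (2 * B + 1) * (N.choose (k + 1) * (2 * b).choose (2 * B)
        + N.choose k * (2 * b).choose (2 * B + 1)) := by ring
    _ ≤ N * (2 * B + 1) * (N + 2 * b).choose (k + 1 + 2 * B) := by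
        gcongr; rw [show k + 1 + 2 * B = k + 2 * B + 1 by ring]; exact hvdm

end Nat

noncomputable def factorialRatio (A B : ℕ) : ℝ := ((A + 2 * B)! : ℝ) / ((A)! * (B)!)

theorem factorialRatio_pos (A B : ℕ) : 0 < factorialRatio A B := by
  unfold factorialRatio; positivity

theorem factorialRatio_mul_le (k A B C : ℕ) (h : B ≤ C) :
    factorialRatio (k + 1) B * factorialRatio A C ≤
      (2 * B + 1) / 2 ^ B * factorialRatio (k + A) (B + C) := by
  have hN : ((k + A + 1).choose (k + 1) * A ! * (k + 1)! : ℝ) = (k + A + 1) * (k + A)! := by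
    norm_cast
    rw [← factorial_succ, show k + A + 1 = A + (k + 1) by ring,
      add_choose_mul_factorial_mul_factorial]
  have hc : ((B + C).choose B * (C)! * B ! : ℝ) = (B + C)! := by
    norm_cast; rw [add_comm B, add_choose_mul_factorial_mul_factorial]
  have hM : ((k + A + 1 + 2 * (B + C)).choose (k + 1 + 2 * B) * (A + 2 * C)! * (k + 1 + 2 * B)! : ℝ) =
      (k + A + 1 + 2 * (B + C)) * (k + A + 2 * (B + C))! := by
    norm_cast
    rw [show k + A + 1 + 2 * (B + C) = A + 2 * C + (k + 1 + 2 * B) by ring,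
      add_choose_mul_factorial_mul_factorial, show A + 2 * C + (k + 1 + 2 * B) =
      k + A + 2 * (B + C) + 1 by ring, factorial_succ]
  have hbin : (k + A + 1).choose (k + 1) * ((B + C).choose B * 2 ^ B) * (k + A + 1 + 2 * (B + C)) ≤
      (k + A + 1) * (2 * B + 1) * (k + A + 1 + 2 * (B + C)).choose (k + 1 + 2 * B) :=
    calc _ ≤ (k + A + 1).choose (k + 1) * (2 * (B + C)).choose (2 * B) *
          (k + A + 1 + 2 * (B + C)) := by
          gcongr; exact Nat.choose_mul_two_pow_le_choose_two_mul (by omega)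
      _ ≤ _ := Nat.choose_succ_mul_choose_two_mul_mul_le _ _ _ _ (by omega) (by omega)
  have hX : (0 : ℝ) < (k + A + 1 + 2 * (B + C)).choose (k + 1 + 2 * B) * (k + A + 1) := by
    have := Nat.choose_pos (n := k + A + 1 + 2 * (B + C)) (k := k + 1 + 2 * B) (by omega)
    positivity
  -- multiplied by `C(N + 2c, k + 1 + 2B) · N` (with `N = k + A + 1`, `c = B + C`), the inequality
  -- reduces to `hbin` after cancelling `F`
  unfold factorialRatio
  rw [_root_.div_mul_div_comm, _root_.div_mul_div_comm, div_le_div_iff₀ (by positivity) (by positivity)]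
  refine le_of_mul_le_mul_right ?_ hX
  set F : ℝ := (k + A + 2 * (B + C))! * (k + 1)! * A ! * B ! * (C)!
  calc _ = F * ((k + A + 1).choose (k + 1) * ((B + C).choose B * 2 ^ B) * (k + A + 1 + 2 * (B + C))) := by
        linear_combination (2 ^ B * (k + A)! * (B + C)! * (k + A + 1) : ℝ) * hM
          - (2 ^ B * (B + C)! * (k + A + 1 + 2 * (B + C)) * (k + A + 2 * (B + C))! : ℝ) * hN
          - (2 ^ B * (k + A + 1 + 2 * (B + C)) * (k + A + 2 * (B + C))! *
              (k + A + 1).choose (k + 1) * A ! * (k + 1)! : ℝ) * hc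
    _ ≤ F * ((k + A + 1) * (2 * B + 1) * (k + A + 1 + 2 * (B + C)).choose (k + 1 + 2 * B)) :=
        mul_le_mul_of_nonneg_left (by exact_mod_cast hbin) (by positivity)
    _ = _ := by simp only [F]; ring

theorem factorialRatio_mul_factorialRatio_le (k l B C : ℕ) :
    factorialRatio (k + 1) B * factorialRatio (l + 1) C ≤
      ((2 * B + 1) / 2 ^ B + (2 * C + 1) / 2 ^ C) * factorialRatio (k + l + 1) (B + C) := by
  have hpos := (factorialRatio_pos (k + l + 1) (B + C)).le
  rcases le_total B C with h | h
  · calc _ ≤ (2 * B + 1) / 2 ^ B * factorialRatio (k + l + 1) (B + C) :=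
          factorialRatio_mul_le k (l + 1) B C h
      _ ≤ _ := mul_le_mul_of_nonneg_right (le_add_of_nonneg_right (by positivity)) hpos
  · calc _ = factorialRatio (l + 1) C * factorialRatio (k + 1) B := mul_comm _ _
      _ ≤ (2 * C + 1) / 2 ^ C * factorialRatio (k + l + 1) (B + C) := by
          rw [show k + l + 1 = l + (k + 1) by ring, add_comm B]
          exact factorialRatio_mul_le l (k + 1) C B h
      _ ≤ _ := mul_le_mul_of_nonneg_right (le_add_of_nonneg_left (by positivity)) hpos

theorem sum_range_two_mul_add_one_div_two_pow (n : ℕ) :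
    ∑ j ∈ range n, (2 * j + 1 : ℝ) / 2 ^ j = 6 - (4 * n + 6) / 2 ^ n := by
  induction n with
  | zero => norm_num
  | succ n ih =>
    rw [sum_range_succ, ih]
    field_simp
    push_cast
    ring

theorem sum_antidiagonal_factorialRatio_mul_le (k l b : ℕ) :
    ∑ p ∈ antidiagonal b, factorialRatio (k + 1) p.1 * factorialRatio (l + 1) p.2 ≤
      12 * factorialRatio (k + l + 1) b := by
  have hweights : ∑ p ∈ antidiagonal b,
      ((2 * p.1 + 1 : ℝ) / 2 ^ p.1 + (2 * p.2 + 1) / 2 ^ p.2) ≤ 12 := by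
    have hswap : ∑ p ∈ antidiagonal b, (2 * p.2 + 1 : ℝ) / 2 ^ p.2 =
        ∑ p ∈ antidiagonal b, (2 * p.1 + 1 : ℝ) / 2 ^ p.1 :=
      Nat.sum_antidiagonal_swap (f := fun p => (2 * p.1 + 1 : ℝ) / 2 ^ p.1)
    rw [sum_add_distrib, hswap, Nat.sum_antidiagonal_eq_sum_range_succ_mk, succ_eq_add_one,
      sum_range_two_mul_add_one_div_two_pow]
    have : (0 : ℝ) ≤ (4 * (b + 1 : ℕ) + 6) / 2 ^ (b + 1) := by positivity
    linarith
  calc _ ≤ ∑ p ∈ antidiagonal b, ((2 * p.1 + 1 : ℝ) / 2 ^ p.1 + (2 * p.2 + 1) / 2 ^ p.2) *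
        factorialRatio (k + l + 1) b := by
        refine sum_le_sum fun p hp => ?_
        rw [← HasAntidiagonal.mem_antidiagonal.mp hp]
        exact factorialRatio_mul_factorialRatio_le k l p.1 p.2
    _ ≤ 12 * factorialRatio (k + l + 1) b := by
        rw [← sum_mul]; exact mul_le_mul_of_nonneg_right hweights (factorialRatio_pos _ _).le

theorem sum_piAntidiag_prod_factorialRatio_le {ι : Type*} [DecidableEq ι] (s : Finset ι)
    (A : ι → ℕ) (b : ℕ) :
    ∑ B ∈ piAntidiag s b, ∏ i ∈ s, factorialRatio (A i + 1) (B i) ≤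
      12 ^ #s * factorialRatio (∑ i ∈ s, A i + 1) b := by
  induction s using Finset.cons_induction generalizing b with
  | empty =>
    cases b with
    | zero => simp [factorialRatio]
    | succ b =>
      rw [piAntidiag_empty_of_ne_zero b.succ_ne_zero, sum_empty]
      exact (mul_pos (by positivity) (factorialRatio_pos _ _)).le
  | cons i s hi ih =>
    have hsplit : ∀ p ∈ antidiagonal b, ∀ B ∈ piAntidiag s p.2,
        ∏ j ∈ cons i s hi, factorialRatio (A j + 1) ((B + fun t => if t = i then p.1 else 0) j) =
          factorialRatio (A i + 1) p.1 * ∏ j ∈ s, factorialRatio (A j + 1) (B j) := by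
      intro p _ B hB
      have hBi : B i = 0 := by
        by_contra h; exact hi ((mem_piAntidiag.mp hB).2 i h)
      rw [prod_cons]
      congr 1
      · simp [hBi]
      · refine prod_congr rfl fun j hj => ?_
        simp [show j ≠ i by rintro rfl; exact hi hj]
    rw [piAntidiag_cons hi, sum_disjiUnion, card_cons, sum_cons]
    calc _ = ∑ p ∈ antidiagonal b, factorialRatio (A i + 1) p.1 *
          ∑ B ∈ piAntidiag s p.2, ∏ j ∈ s, factorialRatio (A j + 1) (B j) := by
          refine sum_congr rfl fun p hp => ?_
          rw [sum_map, mul_sum]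
          exact sum_congr rfl (hsplit p hp)
      _ ≤ ∑ p ∈ antidiagonal b, factorialRatio (A i + 1) p.1 *
          (12 ^ #s * factorialRatio (∑ j ∈ s, A j + 1) p.2) :=
          sum_le_sum fun p _ => mul_le_mul_of_nonneg_left (ih p.2) (factorialRatio_pos _ _).le
      _ = 12 ^ #s * ∑ p ∈ antidiagonal b,
          factorialRatio (A i + 1) p.1 * factorialRatio (∑ j ∈ s, A j + 1) p.2 := by
          rw [mul_sum]; exact sum_congr rfl fun p _ => by ring
      _ ≤ 12 ^ #s * (12 * factorialRatio (A i + ∑ j ∈ s, A j + 1) b) := by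
          gcongr; exact sum_antidiagonal_factorialRatio_mul_le _ _ b
      _ = _ := by ring

theorem Finset.Nat.card_antidiagonalTuple (k n : ℕ) :
    #(Finset.Nat.antidiagonalTuple k n) = (k + n - 1).choose n := by
  rw [← piAntidiag_univ_fin_eq_antidiagonalTuple, ← map_sym_eq_piAntidiag, card_map, sym_univ,
    Finset.card_univ, Sym.card_sym_eq_choose, Fintype.card_fin]

theorem card_compositions_le (n k : ℕ) : #(compositions n k) ≤ 2 ^ (n + k) :=
  calc _ ≤ #(Finset.Nat.antidiagonalTuple k n) := card_filter_le _ _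
    _ ≤ 2 ^ (k + n - 1) := by
      rw [Finset.Nat.card_antidiagonalTuple]; exact choose_le_two_pow _ _
    _ ≤ 2 ^ (n + k) := Nat.pow_le_pow_right two_pos (by omega)

theorem sum_weakCompositions_prod_factorialRatio_le {k a : ℕ} (A : Fin k → ℕ)
    (hpos : ∀ i, 0 < A i) (hsum : ∑ i, A i + 1 = a + k) (b : ℕ) :
    ∑ B ∈ weakCompositions b k, ∏ i, factorialRatio (A i) (B i) ≤ 12 ^ k * factorialRatio a b := by
  have hA : A = fun i => (A i - 1) + 1 := funext fun i => (Nat.sub_add_cancel (hpos i)).symm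
  have hsum' : ∑ i, (A i - 1) + 1 = a := by
    rw [hA, sum_add_distrib, sum_const, Finset.card_univ, Fintype.card_fin, smul_eq_mul] at hsum
    omega
  rw [weakCompositions, ← piAntidiag_univ_fin_eq_antidiagonalTuple, hA]
  simpa only [hsum', Finset.card_univ, Fintype.card_fin] using
    sum_piAntidiag_prod_factorialRatio_le univ (fun i => A i - 1) b

theorem sum_compositions_prod_le_general (L a b : ℕ) (haL : a ≤ L) :
    ∑ A ∈ compositions L (L - a + 1), ∑ B ∈ weakCompositions b (L - a + 1),
      ∏ i, ((A i + 2 * B i)! : ℝ) / ((A i)! * (B i)!) ≤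
    2 ^ (9 * L + 5) * (a + 2 * b)! / ((a)! * (b)!) := by
  have hterm : ∀ A ∈ compositions L (L - a + 1), ∑ B ∈ weakCompositions b (L - a + 1),
      ∏ i, factorialRatio (A i) (B i) ≤ 12 ^ (L - a + 1) * factorialRatio a b := by
    intro A hA
    simp only [compositions, mem_filter, Nat.mem_antidiagonalTuple] at hA
    exact sum_weakCompositions_prod_factorialRatio_le A hA.2 (by omega) b
  have hscale : (#(compositions L (L - a + 1)) : ℝ) * 12 ^ (L - a + 1) ≤ 2 ^ (9 * L + 5) :=
    calc _ ≤ (2 : ℝ) ^ (L + (L - a + 1)) * 16 ^ (L - a + 1) := by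
          gcongr
          · exact_mod_cast card_compositions_le L (L - a + 1)
          · norm_num
      _ = 2 ^ (L + 5 * (L - a + 1)) := by
          rw [show (16 : ℝ) = 2 ^ 4 by norm_num, ← pow_mul, ← pow_add]; ring_nf
      _ ≤ 2 ^ (9 * L + 5) := pow_le_pow_right₀ (by norm_num) (by omega)
  calc _ ≤ ∑ _A ∈ compositions L (L - a + 1), 12 ^ (L - a + 1) * factorialRatio a b :=
        sum_le_sum hterm
    _ = #(compositions L (L - a + 1)) * 12 ^ (L - a + 1) * factorialRatio a b := by
        rw [sum_const, nsmul_eq_mul, mul_assoc]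
    _ ≤ 2 ^ (9 * L + 5) * factorialRatio a b :=
        mul_le_mul_of_nonneg_right hscale (factorialRatio_pos a b).le
    _ = _ := by rw [factorialRatio, mul_div_assoc]

/-- Let `L ≥ a ≥ 0` and `b ≥ 0` be integers with `L` positive. Then
`Σ_{A ∈ C_L(L−a+1)} Σ_{B ∈ G_b(L−a+1)} ∏_i (A_i + 2B_i)!/(A_i!·B_i!)
  ≤ 2^{9L+5}·(a+2b)!/(a!·b!)`. -/
theorem sum_compositions_prod_le (L a b : ℕ) (hL : 0 < L) (haL : a ≤ L) :
    ∑ A ∈ compositions L (L - a + 1), ∑ B ∈ weakCompositions b (L - a + 1),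
      ∏ i, ((A i + 2 * B i)! : ℝ) / ((A i)! * (B i)!) ≤
    2 ^ (9 * L + 5) * (a + 2 * b)! / ((a)! * (b)!) :=
  sum_compositions_prod_le_general L a b haL
end

section
/- Let n ≤ r be positive integers and let k₁, k₂, …, k_n be positive integers with k = k₁ + k₂ + … + k_n. Then Σ_{ℓ ∈ C_r(n)} ∏_{i=1}^n k_i^{2ℓ_i − 2} / (2ℓ_i − 2)! ≤ k^{2(r−n)} / (2r − 2n)!. -/
/-!
The substitution `a = 2ℓ - 2` maps `C_r(n)` injectively into `G_{2(r-n)}(n)`, so the left-hand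
side is a partial sum of `∑_{a ∈ G_N(n)} ∏ k_i^{a_i} / a_i!` with nonnegative terms, and by the
multinomial theorem that full sum is `k^N / N!`.
-/

open Nat Finset

theorem Finset.sum_pow_div_factorial_eq_sum_piAntidiag {ι K : Type*} [DecidableEq ι] [Field K]
    [CharZero K] (s : Finset ι) (x : ι → K) (N : ℕ) :
    (∑ i ∈ s, x i) ^ N / N ! = ∑ a ∈ s.piAntidiag N, ∏ i ∈ s, x i ^ a i / (a i)! := by
  rw [div_eq_iff (Nat.cast_ne_zero.2 N.factorial_ne_zero), sum_pow_eq_sum_piAntidiag, sum_mul]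
  refine sum_congr rfl fun a ha => ?_
  rw [← (mem_piAntidiag.1 ha).1, ← Nat.multinomial_spec, prod_div_distrib]
  have : ∀ i ∈ s, ((a i)! : K) ≠ 0 := fun i _ => Nat.cast_ne_zero.2 (a i).factorial_ne_zero
  push_cast
  field_simp [prod_ne_zero_iff.2 this]

theorem mem_compositions {r n : ℕ} {l : Fin n → ℕ} :
    l ∈ compositions r n ↔ ∑ i, l i = r ∧ ∀ i, 0 < l i := by
  rw [compositions, mem_filter, Nat.mem_antidiagonalTuple]

theorem injOn_two_mul_sub_two_compositions (r n : ℕ) :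
    Set.InjOn (fun (l : Fin n → ℕ) i => 2 * l i - 2) (compositions r n) := by
  intro x hx y hy hxy
  funext i
  have hi : 2 * x i - 2 = 2 * y i - 2 := congrFun hxy i
  have := (mem_compositions.1 hx).2 i
  have := (mem_compositions.1 hy).2 i
  omega

theorem image_two_mul_sub_two_compositions_subset (r n : ℕ) :
    (compositions r n).image (fun l i => 2 * l i - 2) ⊆ univ.piAntidiag (2 * (r - n)) := by
  simp only [subset_iff, mem_image, mem_piAntidiag, mem_compositions]
  rintro _ ⟨l, ⟨rfl, hl⟩, rfl⟩
  refine ⟨?_, by simp⟩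
  have hsum : ∑ i, (2 * l i - 2 + 2) = ∑ i, 2 * l i :=
    sum_congr rfl fun i _ => by have := hl i; omega
  rw [sum_add_distrib, ← mul_sum, sum_const, Finset.card_fin, smul_eq_mul] at hsum
  omega

theorem sum_compositions_pow_div_factorial_le_general (n r : ℕ) (k : Fin n → ℕ) :
    ∑ l ∈ compositions r n, ∏ i, (k i : ℝ) ^ (2 * l i - 2) / (2 * l i - 2)! ≤
      ((∑ i, k i : ℕ) : ℝ) ^ (2 * (r - n)) / (2 * r - 2 * n)! := by
  rw [← Nat.mul_sub, Nat.cast_sum, sum_pow_div_factorial_eq_sum_piAntidiag]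
  calc _ = ∑ a ∈ (compositions r n).image (fun l i => 2 * l i - 2),
          ∏ i, (k i : ℝ) ^ a i / (a i)! :=
        (sum_image (injOn_two_mul_sub_two_compositions r n)).symm
    _ ≤ _ := sum_le_sum_of_subset_of_nonneg (image_two_mul_sub_two_compositions_subset r n)
        fun _ _ _ => by positivity

/-- Let `n ≤ r` be positive integers and `k₁, …, k_n` positive integers
with `k = Σ k_i`.  Then `Σ_{ℓ ∈ C_r(n)} ∏_i k_i^{2ℓ_i−2}/(2ℓ_i−2)! ≤ k^{2(r−n)}/(2r−2n)!`. -/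
theorem sum_compositions_pow_div_factorial_le (n r : ℕ) (hn : 0 < n) (hnr : n ≤ r)
    (k : Fin n → ℕ) (hk : ∀ i, 0 < k i) :
    ∑ l ∈ compositions r n, ∏ i, (k i : ℝ) ^ (2 * l i - 2) / (2 * l i - 2)! ≤
      ((∑ i, k i : ℕ) : ℝ) ^ (2 * (r - n)) / (2 * r - 2 * n)! :=
  sum_compositions_pow_div_factorial_le_general n r k
end

section
/- For every integer k ≥ 1, Σ_{i=1}^{k−1} i! · (k − i)! ≤ 4 · (k − 1)!. -/
/-!
For fixed `i + j` with `i, j ≥ m`, the product `i ! * j !` is largest when one of `i, j` equals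
`m`, since moving a unit from `j` to `i ≥ j` multiplies it by `(i + 1) / j ≥ 1`. Hence every
middle term `i ! * (k - i)!` with `2 ≤ i ≤ k - 2` is at most `2 * (k - 2)!`. The `k - 3` middle
terms thus contribute at most `2 * (k - 1)!`, and the two end terms `(k - 1)!` each.
-/

open Nat Finset

theorem factorial_add_mul_factorial_add_le (a b m : ℕ) :
    (a + m)! * (b + m)! ≤ m ! * (a + b + m)! := by
  induction a with
  | zero => simp
  | succ a ih =>
    calc (a + 1 + m)! * (b + m)! = (a + m + 1) * ((a + m)! * (b + m)!) := by
          rw [show a + 1 + m = a + m + 1 by omega, factorial_succ, mul_assoc]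
      _ ≤ (a + b + m + 1) * (m ! * (a + b + m)!) := by gcongr; omega
      _ = m ! * (a + 1 + b + m)! := by
          rw [show a + 1 + b + m = a + b + m + 1 by omega, factorial_succ]; ring

theorem factorial_mul_factorial_le_of_le {i j m : ℕ} (hi : m ≤ i) (hj : m ≤ j) :
    i ! * j ! ≤ m ! * (i + j - m)! := by
  obtain ⟨a, rfl⟩ := exists_add_of_le hi
  obtain ⟨b, rfl⟩ := exists_add_of_le hj
  rw [show m + a + (m + b) - m = a + b + m by omega, add_comm m, add_comm m]
  exact factorial_add_mul_factorial_add_le a b m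

theorem sum_Ico_two_factorial_mul_factorial_le (n : ℕ) :
    ∑ i ∈ Ico 2 (n + 2), i ! * (n + 3 - i)! ≤ 2 * (n + 2)! := by
  calc ∑ i ∈ Ico 2 (n + 2), i ! * (n + 3 - i)! ≤ #(Ico 2 (n + 2)) • (2 ! * (n + 1)!) := by
        refine sum_le_card_nsmul _ _ _ fun i hi => ?_
        obtain ⟨hi₁, hi₂⟩ := mem_Ico.1 hi
        simpa [show i + (n + 3 - i) - 2 = n + 1 by omega]
          using factorial_mul_factorial_le_of_le hi₁ (show 2 ≤ n + 3 - i by omega)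
    _ = n * (2 * (n + 1)!) := by simp
    _ ≤ (n + 2) * (2 * (n + 1)!) := by gcongr; omega
    _ = 2 * (n + 2)! := by rw [factorial_succ (n + 1)]; ring

theorem sum_factorial_mul_factorial_le_general (k : ℕ) :
    ∑ i ∈ Finset.Ico 1 k, i ! * (k - i)! ≤ 4 * (k - 1)! := by
  obtain hk | ⟨n, rfl⟩ : k < 3 ∨ ∃ n, k = n + 3 :=
    (lt_or_ge k 3).imp_right fun hk => ⟨k - 3, by omega⟩
  · interval_cases k <;> decide
  · rw [sum_eq_sum_Ico_succ_bot (by omega), sum_Ico_succ_top (by omega)]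
    have hmid := sum_Ico_two_factorial_mul_factorial_le n
    simp only [show 1 + 1 = 2 from rfl, show n + 3 - 1 = n + 2 by omega,
      show n + 3 - (n + 2) = 1 by omega, factorial_one, one_mul, mul_one] at hmid ⊢
    omega

/-- For every integer `k ≥ 1`,
`Σ_{i=1}^{k−1} i! · (k − i)! ≤ 4 · (k − 1)!`. -/
theorem sum_factorial_mul_factorial_le (k : ℕ) (hk : 1 ≤ k) :
    ∑ i ∈ Finset.Ico 1 k, i ! * (k - i)! ≤ 4 * (k - 1)! :=
  sum_factorial_mul_factorial_le_general k
end

section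
/- Let n be a positive integer and let m = (m₁, m₂, …, m_n) be an n-tuple of integers with every m_i ≥ 2. Then |E(m)| ≤ 2^{40} · (|m| − 1)!. -/
open Nat Finset

attribute [local instance] Classical.propDecidable

/-- The series `ζ(k) = Σ_{j=1}^∞ j^{−k}` (convergent for `k ≥ 2`). -/
noncomputable def zetaSeries (k : ℤ) : ℝ :=
  ∑' j : ℕ, ((j : ℝ) + 1) ^ (-k)

/-- `𝔷(k) = (2 − 2^{2−k}) ζ(k)` for even integers `k ≥ 2`, `𝔷(0) = 1`, and `𝔷(k) = 0`
for all other integers `k` (in particular for odd or negative `k`). -/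
noncomputable def zed (k : ℤ) : ℝ :=
  if k = 0 then 1
  else if 2 ≤ k ∧ Even k then (2 - (2 : ℝ) ^ (2 - k)) * zetaSeries k
  else 0

/-- `P` is a (reduced) set partition of the finite set `S`: a collection of nonempty
disjoint subsets of `S` whose union is `S` (each element of `S` lies in exactly one
component). -/
def IsSetPartitionOn {ι : Type*} [DecidableEq ι] (S : Finset ι) (P : Finset (Finset ι)) :
    Prop :=
  (∀ s ∈ P, s ⊆ S ∧ s ≠ ∅) ∧ ∀ x ∈ S, ∃! s, s ∈ P ∧ x ∈ s

/-- The quantity `E(m)` of Eskin–Okounkov, for a weight function `v` on a finite ground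
set `S`:
`E = Σ_{P partition of S, ℓ(P) ≥ 2} (−1)^{ℓ(P)−1} (ℓ(P)−2)!
      Σ_{d : P → ℕ, Σ d = ℓ(P)−2} ∏_{s ∈ P} (1/d_s!) · |v_s|! · 𝔷(|v_s| − |s| − d_s + 1)`,
where `|v_s| = Σ_{x ∈ s} v(x)` and `|s|` is the cardinality of the component `s`. -/
noncomputable def Emap {ι : Type*} [Fintype ι] [DecidableEq ι]
    (S : Finset ι) (v : ι → ℕ) : ℝ :=
  ∑ P ∈ Finset.univ.filter
      (fun P : Finset (Finset ι) => IsSetPartitionOn S P ∧ 2 ≤ P.card),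
    (-1 : ℝ) ^ (P.card - 1) * ((P.card - 2)! : ℝ) *
      ∑ d ∈ Finset.finsuppAntidiag P (P.card - 2),
        ∏ s ∈ P,
          (1 / ((d s)! : ℝ) * ((∑ x ∈ s, v x)! : ℝ) *
            zed ((∑ x ∈ s, v x : ℤ) - s.card - d s + 1))

/-!
A partition `α` with `ℓ` blocks contributes at most `(ℓ - 2)! (33/4)^ℓ ∏ᵢ |m_{α⁽ⁱ⁾}|!` to `E(m)`:
`|𝔷| ≤ 3`, and by the multinomial theorem the sum over `d` of `∏ᵢ 1/dᵢ!` is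
`ℓ^(ℓ-2) / (ℓ-2)! ≤ e^ℓ`. Lowering every `mⱼ` to `2` divides `∏ᵢ |m_{α⁽ⁱ⁾}|!` by at most
`(|m| - 2ℓ + 2)! / (2n - 2ℓ + 2)!`, which reduces the problem to `m ≡ 2`. There
`ℓ! Σ_α ∏ᵢ (2|α⁽ⁱ⁾|)!` is at most `n!` times the `ℓ`-fold convolution of `k ↦ (2k)!/k!` at `n`,
and that convolution is dominated, up to a factor `9^(ℓ-1)`, by its extreme term: one block of
size `n - ℓ + 1` and `ℓ - 1` singletons. Comparing this term with `(2n - 1)!` bounds the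
partitions with `ℓ` blocks by `2^32 (|m| - 1)! / (ℓ (ℓ - 1))`, and `Σ_ℓ 1/(ℓ (ℓ - 1)) ≤ 1`.
-/

namespace IsSetPartitionOn

variable {ι : Type*} [DecidableEq ι] {S : Finset ι} {P : Finset (Finset ι)}

lemma pairwiseDisjoint (hP : IsSetPartitionOn S P) :
    (P : Set (Finset ι)).PairwiseDisjoint id := by
  intro s hs t ht hst
  refine Finset.disjoint_left.2 fun x hxs hxt => hst ?_
  obtain ⟨u, -, hu⟩ := hP.2 x ((hP.1 s hs).1 hxs)
  exact (hu s ⟨hs, hxs⟩).trans (hu t ⟨ht, hxt⟩).symm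

lemma biUnion_eq (hP : IsSetPartitionOn S P) : P.biUnion id = S := by
  ext x
  simp only [mem_biUnion, id]
  refine ⟨fun ⟨s, hs, hx⟩ => (hP.1 s hs).1 hx, fun hx => ?_⟩
  obtain ⟨s, hs, -⟩ := hP.2 x hx
  exact ⟨s, hs⟩

lemma sum_sum_eq {β : Type*} [AddCommMonoid β] (hP : IsSetPartitionOn S P) (v : ι → β) :
    ∑ s ∈ P, ∑ x ∈ s, v x = ∑ x ∈ S, v x := by
  rw [← hP.biUnion_eq, sum_biUnion hP.pairwiseDisjoint]
  rfl

lemma sum_card_eq (hP : IsSetPartitionOn S P) : ∑ s ∈ P, s.card = S.card := by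
  simpa only [card_eq_sum_ones] using hP.sum_sum_eq (fun _ => 1)

lemma card_pos_of_mem (hP : IsSetPartitionOn S P) {s : Finset ι} (hs : s ∈ P) : 0 < s.card :=
  card_pos.2 (nonempty_iff_ne_empty.2 (hP.1 s hs).2)

lemma card_le (hP : IsSetPartitionOn S P) : P.card ≤ S.card := by
  rw [← hP.sum_card_eq, card_eq_sum_ones]
  exact sum_le_sum fun s hs => hP.card_pos_of_mem hs

lemma erase (hP : IsSetPartitionOn S P) {t : Finset ι} (ht : t ∈ P) :
    IsSetPartitionOn (S \ t) (P.erase t) := by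
  refine ⟨fun s hs => ?_, fun x hx => ?_⟩
  · obtain ⟨hst, hsP⟩ := mem_erase.1 hs
    refine ⟨fun x hxs => mem_sdiff.2 ⟨(hP.1 s hsP).1 hxs, fun hxt => ?_⟩, (hP.1 s hsP).2⟩
    exact Finset.disjoint_left.1 (hP.pairwiseDisjoint hsP ht hst) hxs hxt
  · obtain ⟨hxS, hxt⟩ := mem_sdiff.1 hx
    obtain ⟨s, ⟨hsP, hxs⟩, hu⟩ := hP.2 x hxS
    refine ⟨s, ⟨mem_erase.2 ⟨fun h => hxt (h ▸ hxs), hsP⟩, hxs⟩, fun u hu' => ?_⟩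
    exact hu u ⟨mem_of_mem_erase hu'.1, hu'.2⟩

end IsSetPartitionOn

namespace EskinOkounkov

open Real

lemma hasSum_zetaSeries_iff {k : ℕ} (hk : k ≠ 0) {a : ℝ} :
    HasSum (fun j : ℕ => ((j : ℝ) + 1) ^ (-(k : ℤ))) a ↔
      HasSum (fun n : ℕ => 1 / (n : ℝ) ^ k) a := by
  rw [← hasSum_nat_add_iff' 1 (f := fun n : ℕ => 1 / (n : ℝ) ^ k)]
  simp [hk]

lemma zetaSeries_two : zetaSeries 2 = π ^ 2 / 6 :=
  ((hasSum_zetaSeries_iff two_ne_zero).2 hasSum_zeta_two).tsum_eq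

lemma zetaSeries_four : zetaSeries 4 = π ^ 4 / 90 :=
  ((hasSum_zetaSeries_iff four_ne_zero).2 hasSum_zeta_four).tsum_eq

lemma zetaSeries_nonneg (k : ℤ) : 0 ≤ zetaSeries k :=
  tsum_nonneg fun _ => by positivity

lemma zetaSeries_le_zetaSeries_four {k : ℤ} (hk : 4 ≤ k) : zetaSeries k ≤ zetaSeries 4 := by
  have hle : ∀ j : ℕ, ((j : ℝ) + 1) ^ (-k) ≤ ((j : ℝ) + 1) ^ (-(4 : ℤ)) := fun j =>
    zpow_le_zpow_right₀ (by linarith [j.cast_nonneg (α := ℝ)]) (by omega)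
  have h4 : Summable fun j : ℕ => ((j : ℝ) + 1) ^ (-((4 : ℕ) : ℤ)) :=
    ((hasSum_zetaSeries_iff four_ne_zero).2 hasSum_zeta_four).summable
  exact (h4.of_nonneg_of_le (fun _ => by positivity) hle).tsum_le_tsum hle h4

lemma abs_zed_le (k : ℤ) : |zed k| ≤ 3 := by
  unfold zed
  split_ifs with h0 h
  · norm_num
  · have hpi := pi_lt_d2
    have hcoef : (2 : ℝ) ^ (2 - k) ≤ 1 := zpow_le_one_of_nonpos₀ (by norm_num) (by omega)
    have hcoef' : (0 : ℝ) < 2 ^ (2 - k) := zpow_pos two_pos _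
    rw [abs_of_nonneg (mul_nonneg (by linarith) (zetaSeries_nonneg k))]
    rcases h.1.eq_or_lt with rfl | hlt
    · norm_num [zetaSeries_two]
      nlinarith [pi_pos]
    · have hk4 : 4 ≤ k := by obtain ⟨t, rfl⟩ := h.2; omega
      have hz := zetaSeries_le_zetaSeries_four hk4
      have hpi4 : π ^ 4 ≤ 3.15 ^ 4 := pow_le_pow_left₀ pi_pos.le hpi.le 4
      rw [zetaSeries_four] at hz
      nlinarith [zetaSeries_nonneg k]
  · norm_num

lemma sum_finsuppAntidiag_prod_inv_factorial {α : Type*} [DecidableEq α] (s : Finset α)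
    (k : ℕ) :
    ∑ d ∈ finsuppAntidiag s k, ∏ i ∈ s, 1 / ((d i)! : ℝ) = (s.card : ℝ) ^ k / k ! := by
  have hpi : ∑ d ∈ finsuppAntidiag s k, ∏ i ∈ s, 1 / ((d i)! : ℝ)
      = ∑ f ∈ piAntidiag s k, ∏ i ∈ s, 1 / ((f i)! : ℝ) := by
    rw [finsuppAntidiag, sum_map, ← sum_attach (piAntidiag s k)]
    rfl
  have hmul : ∀ f ∈ piAntidiag s k, ∏ i ∈ s, 1 / ((f i)! : ℝ) = multinomial s f / k ! := by
    intro f hf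
    rw [← (mem_piAntidiag.1 hf).1, ← Nat.multinomial_spec s f]
    push_cast
    have : (multinomial s f : ℝ) ≠ 0 := Nat.cast_ne_zero.2 (Nat.multinomial_pos s f).ne'
    rw [prod_div_distrib, prod_const_one]
    field_simp
  have hsum := Finset.sum_pow_eq_sum_piAntidiag s (fun _ => (1 : ℝ)) k
  simp only [sum_const, nsmul_eq_mul, mul_one, one_pow, prod_const_one] at hsum
  rw [hpi, sum_congr rfl hmul, ← sum_div, hsum]

lemma abs_sum_finsuppAntidiag_prod_le {α : Type*} [DecidableEq α] (P : Finset α) (k : ℕ)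
    {a : α → ℝ} {z : α → ℕ → ℝ} {C : ℝ} (ha : ∀ s, 0 ≤ a s) (hz : ∀ s j, |z s j| ≤ C) :
    |∑ d ∈ finsuppAntidiag P k, ∏ s ∈ P, (1 / ((d s)! : ℝ) * a s * z s (d s))|
      ≤ C ^ P.card * ((P.card : ℝ) ^ k / k !) * ∏ s ∈ P, a s := by
  calc _ ≤ ∑ d ∈ finsuppAntidiag P k, ∏ s ∈ P, (1 / ((d s)! : ℝ) * a s * C) := by
        refine (abs_sum_le_sum_abs _ _).trans (sum_le_sum fun d _ => ?_)
        rw [abs_prod]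
        refine prod_le_prod (fun _ _ => abs_nonneg _) fun s _ => ?_
        rw [abs_mul, abs_of_nonneg (by have := ha s; positivity)]
        exact mul_le_mul_of_nonneg_left (hz s _) (by have := ha s; positivity)
    _ = C ^ P.card * (∑ d ∈ finsuppAntidiag P k, ∏ s ∈ P, 1 / ((d s)! : ℝ)) *
          ∏ s ∈ P, a s := by
        simp only [prod_mul_distrib, prod_const, mul_sum, sum_mul]
        exact sum_congr rfl fun _ _ => by ring
    _ = _ := by rw [sum_finsuppAntidiag_prod_inv_factorial]

lemma pow_sub_two_le_factorial_mul (ℓ : ℕ) : (ℓ : ℝ) ^ (ℓ - 2) ≤ (ℓ - 2)! * (11 / 4) ^ ℓ := by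
  have hexp : Real.exp ℓ ≤ (11 / 4) ^ ℓ := by
    rw [← Real.exp_one_pow]
    exact pow_le_pow_left₀ (Real.exp_pos 1).le (Real.exp_one_lt_d9.le.trans (by norm_num)) ℓ
  have := Real.pow_div_factorial_le_exp (x := ℓ) (by positivity) (ℓ - 2)
  rw [div_le_iff₀ (by positivity)] at this
  nlinarith [(Nat.factorial_pos (ℓ - 2)).le]

lemma abs_Emap_le_sum {ι : Type*} [Fintype ι] [DecidableEq ι] (S : Finset ι) (v : ι → ℕ) :
    |Emap S v| ≤ ∑ P ∈ univ.filter (fun P : Finset (Finset ι) =>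
        IsSetPartitionOn S P ∧ 2 ≤ P.card),
      ((P.card - 2)! : ℝ) * (33 / 4) ^ P.card * ∏ s ∈ P, ((∑ x ∈ s, v x)! : ℝ) := by
  refine (abs_sum_le_sum_abs _ _).trans (sum_le_sum fun P _ => ?_)
  set ℓ := P.card
  set A := ∏ s ∈ P, ((∑ x ∈ s, v x)! : ℝ)
  have hinner := abs_sum_finsuppAntidiag_prod_le P (ℓ - 2) (a := fun s => ((∑ x ∈ s, v x)! : ℝ))
    (z := fun s j => zed ((∑ x ∈ s, v x : ℤ) - s.card - j + 1))
    (fun _ => by positivity) (fun _ _ => abs_zed_le _)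
  have hfac : (0 : ℝ) < (ℓ - 2)! := by positivity
  rw [abs_mul, abs_mul, abs_pow, abs_neg, abs_one, one_pow, one_mul, Nat.abs_cast]
  calc _ ≤ ((ℓ - 2)! : ℝ) * (3 ^ ℓ * ((ℓ : ℝ) ^ (ℓ - 2) / (ℓ - 2)!) * A) :=
        mul_le_mul_of_nonneg_left hinner hfac.le
    _ = 3 ^ ℓ * (ℓ : ℝ) ^ (ℓ - 2) * A := by field_simp
    _ ≤ 3 ^ ℓ * ((ℓ - 2)! * (11 / 4) ^ ℓ) * A := by
        gcongr
        exact pow_sub_two_le_factorial_mul ℓ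
    _ = _ := by rw [show (33 / 4 : ℝ) = 3 * (11 / 4) by norm_num, mul_pow]; ring

def centralDescFactorial (k : ℕ) : ℕ := (2 * k).descFactorial k

lemma centralDescFactorial_mul_factorial (k : ℕ) :
    centralDescFactorial k * k ! = (2 * k)! := by
  have := Nat.factorial_mul_descFactorial (show k ≤ 2 * k by omega)
  rwa [show 2 * k - k = k by omega, mul_comm] at this

lemma centralDescFactorial_succ (k : ℕ) :
    centralDescFactorial (k + 1) = (4 * k + 2) * centralDescFactorial k := by
  apply Nat.eq_of_mul_eq_mul_right (Nat.factorial_pos (k + 1))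
  rw [centralDescFactorial_mul_factorial, show 2 * (k + 1) = 2 * k + 1 + 1 by ring,
    Nat.factorial_succ, Nat.factorial_succ, Nat.factorial_succ,
    ← centralDescFactorial_mul_factorial]
  ring

lemma centralDescFactorial_eq_mul_prod {r m : ℕ} (h : r ≤ m) :
    centralDescFactorial m = centralDescFactorial r * ∏ j ∈ Ico r m, (4 * j + 2) := by
  induction m, h using Nat.le_induction with
  | base => simp
  | succ m hrm ih => rw [prod_Ico_succ_top hrm, centralDescFactorial_succ, ih]; ring

lemma two_le_one_add_pow {k : ℕ} (hk : 3 ≤ k) : (2 : ℝ) ≤ (1 + 2 / (2 * k + 1)) ^ k := by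
  set x : ℝ := 2 / (2 * k + 1) with hx
  have hbern := one_add_mul_le_pow (a := x) (by linarith [show 0 ≤ x by positivity]) (k - 2)
  have hsplit : (1 + x) ^ k = (1 + x) ^ (k - 2) * (1 + x) ^ 2 := by
    rw [← pow_add]; congr 1; omega
  have hk' : (3 : ℝ) ≤ k := by exact_mod_cast hk
  rw [Nat.cast_sub (by omega : 2 ≤ k), Nat.cast_two] at hbern
  have hkey : 2 ≤ (1 + (k - 2) * x) * (1 + x) ^ 2 := by
    rw [hx, ← sub_nonneg]
    field_simp
    nlinarith
  rw [hsplit]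
  exact hkey.trans (mul_le_mul_of_nonneg_right hbern (by positivity))

noncomputable def scaledCentralDescFactorial (k : ℕ) : ℝ :=
  centralDescFactorial k / ((4 * k + 2 : ℕ) : ℝ) ^ (k - 1)

lemma scaledCentralDescFactorial_nonneg (k : ℕ) : 0 ≤ scaledCentralDescFactorial k := by
  unfold scaledCentralDescFactorial; positivity

lemma two_mul_scaledCentralDescFactorial_succ_le {k : ℕ} (hk : 3 ≤ k) :
    2 * scaledCentralDescFactorial (k + 1) ≤ scaledCentralDescFactorial k := by
  have hgrow :
      ((4 * (k + 1) + 2 : ℕ) : ℝ) = ((4 * k + 2 : ℕ) : ℝ) * (1 + 2 / (2 * k + 1)) := by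
    push_cast; field_simp; ring
  have hy := two_le_one_add_pow hk
  unfold scaledCentralDescFactorial
  rw [centralDescFactorial_succ, Nat.add_sub_cancel, hgrow, mul_pow, Nat.cast_mul]
  have hp : (0 : ℝ) < ((4 * k + 2 : ℕ) : ℝ) := by positivity
  generalize ((4 * k + 2 : ℕ) : ℝ) = p at hp ⊢
  generalize (1 + 2 / (2 * (k : ℝ) + 1)) ^ k = y at hy ⊢
  have hpow : p ^ k = p ^ (k - 1) * p := by rw [← pow_succ]; congr 1; omega
  rw [hpow]
  calc _ = centralDescFactorial k / p ^ (k - 1) * (2 / y) := by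
        field_simp
    _ ≤ centralDescFactorial k / p ^ (k - 1) * 1 := by
        gcongr
        rw [div_le_one (by positivity)]
        exact hy
    _ = _ := mul_one _

lemma sum_Icc_le_two_mul_of_two_mul_succ_le {u : ℕ → ℝ} {a : ℕ} (hu : ∀ k, 0 ≤ u k)
    (h : ∀ k, a ≤ k → 2 * u (k + 1) ≤ u k) (m : ℕ) : ∑ k ∈ Icc a m, u k ≤ 2 * u a := by
  rcases lt_or_ge m a with hm | hm
  · rw [Icc_eq_empty_of_lt hm, sum_empty]; linarith [hu a]
  suffices ∑ k ∈ Icc a m, u k + u m ≤ 2 * u a by linarith [hu m]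
  induction m, hm using Nat.le_induction with
  | base => simp; linarith
  | succ m ham ih => rw [sum_Icc_succ_top (by omega)]; linarith [h m ham]

lemma sum_scaledCentralDescFactorial_le (m : ℕ) :
    ∑ k ∈ Icc 1 m, scaledCentralDescFactorial k ≤ 9 / 2 := by
  have hsub : Icc 1 m ⊆ {1, 2} ∪ Icc 3 m := fun k hk => by
    simp only [mem_union, mem_insert, mem_singleton, mem_Icc] at hk ⊢; omega
  have hdisj : Disjoint ({1, 2} : Finset ℕ) (Icc 3 m) := by
    simp [Finset.disjoint_left]
  have htail := sum_Icc_le_two_mul_of_two_mul_succ_le scaledCentralDescFactorial_nonneg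
    (fun k hk => two_mul_scaledCentralDescFactorial_succ_le hk) m
  have h1 : scaledCentralDescFactorial 1 = 2 := by
    norm_num [scaledCentralDescFactorial, centralDescFactorial, Nat.descFactorial]
  have h2 : scaledCentralDescFactorial 2 = 6 / 5 := by
    norm_num [scaledCentralDescFactorial, centralDescFactorial, Nat.descFactorial]
  have h3 : scaledCentralDescFactorial 3 = 30 / 49 := by
    norm_num [scaledCentralDescFactorial, centralDescFactorial, Nat.descFactorial]
  calc _ ≤ ∑ k ∈ {1, 2} ∪ Icc 3 m, scaledCentralDescFactorial k :=
        sum_le_sum_of_subset_of_nonneg hsub fun k _ _ => scaledCentralDescFactorial_nonneg k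
    _ ≤ 9 / 2 := by
        rw [sum_union hdisj, sum_pair (by norm_num)]
        linarith

lemma centralDescFactorial_sub_mul_pow_le {S k : ℕ} (hk : 1 ≤ k) (hkS : 2 * k ≤ S) :
    centralDescFactorial (S - k) * (4 * k + 2) ^ (k - 1) ≤ centralDescFactorial (S - 1) := by
  rw [centralDescFactorial_eq_mul_prod (show S - k ≤ S - 1 by omega)]
  gcongr
  have := pow_card_le_prod (Ico (S - k) (S - 1)) (fun j => 4 * j + 2) (4 * k + 2)
    fun j hj => by simp only [mem_Ico] at hj; omega
  rwa [Nat.card_Ico, show S - 1 - (S - k) = k - 1 by omega] at this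

lemma centralDescFactorial_mul_le {S k : ℕ} (hk : 1 ≤ k) (hkS : 2 * k ≤ S) :
    (centralDescFactorial k : ℝ) * centralDescFactorial (S - k)
      ≤ scaledCentralDescFactorial k * centralDescFactorial (S - 1) := by
  have h : ((centralDescFactorial (S - k) * (4 * k + 2) ^ (k - 1) : ℕ) : ℝ)
      ≤ centralDescFactorial (S - 1) := by
    exact_mod_cast centralDescFactorial_sub_mul_pow_le hk hkS
  rw [Nat.cast_mul, Nat.cast_pow] at h
  unfold scaledCentralDescFactorial
  rw [div_mul_eq_mul_div, le_div_iff₀ (by positivity), mul_assoc]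
  gcongr

lemma sum_centralDescFactorial_mul_le (S : ℕ) :
    ∑ k ∈ Icc 1 (S - 1), centralDescFactorial k * centralDescFactorial (S - k)
      ≤ 9 * centralDescFactorial (S - 1) := by
  set u := scaledCentralDescFactorial
  have hterm : ∀ k ∈ Icc 1 (S - 1),
      (centralDescFactorial k : ℝ) * centralDescFactorial (S - k)
        ≤ (u k + u (S - k)) * centralDescFactorial (S - 1) := by
    intro k hk
    rw [mem_Icc] at hk
    have hu := scaledCentralDescFactorial_nonneg
    rcases le_total (2 * k) S with h | h
    · nlinarith [centralDescFactorial_mul_le hk.1 h, hu (S - k)]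
    · have := centralDescFactorial_mul_le (S := S) (k := S - k) (by omega) (by omega)
      rw [Nat.sub_sub_self (by omega : k ≤ S), mul_comm] at this
      nlinarith [hu k]
  have hreflect : ∑ k ∈ Icc 1 (S - 1), u (S - k) = ∑ k ∈ Icc 1 (S - 1), u k :=
    sum_nbij' (S - ·) (S - ·) (fun k hk => by simp only [mem_Icc] at hk ⊢; omega)
      (fun k hk => by simp only [mem_Icc] at hk ⊢; omega)
      (fun k hk => by simp only [mem_Icc] at hk; omega)
      (fun k hk => by simp only [mem_Icc] at hk; omega) fun _ _ => rfl
  have hsum := sum_scaledCentralDescFactorial_le (S - 1)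
  have hreal :
      (∑ k ∈ Icc 1 (S - 1), centralDescFactorial k * centralDescFactorial (S - k) : ℕ)
        ≤ (9 * centralDescFactorial (S - 1) : ℝ) := by
    push_cast
    calc _ ≤ ∑ k ∈ Icc 1 (S - 1), (u k + u (S - k)) * centralDescFactorial (S - 1) :=
          sum_le_sum hterm
      _ = 2 * (∑ k ∈ Icc 1 (S - 1), u k) * centralDescFactorial (S - 1) := by
          rw [← sum_mul, sum_add_distrib, hreflect]; ring
      _ ≤ _ := by gcongr; linarith
  exact_mod_cast hreal

def compositionWeight : ℕ → ℕ → ℕ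
  | N, 0 => if N = 0 then 1 else 0
  | N, ℓ + 1 => ∑ k ∈ Icc 1 N, centralDescFactorial k * compositionWeight (N - k) ℓ

lemma compositionWeight_eq_zero_of_lt {N ℓ : ℕ} (h : N < ℓ) : compositionWeight N ℓ = 0 := by
  induction ℓ generalizing N with
  | zero => omega
  | succ ℓ ih =>
    refine sum_eq_zero fun k hk => ?_
    rw [mem_Icc] at hk
    rw [ih (by omega), mul_zero]

lemma compositionWeight_one {N : ℕ} (hN : 1 ≤ N) :
    compositionWeight N 1 = centralDescFactorial N := by
  rw [compositionWeight, sum_eq_single_of_mem N (mem_Icc.2 ⟨hN, le_rfl⟩)]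
  · simp [compositionWeight]
  · intro k hk hkN
    rw [mem_Icc] at hk
    simp [compositionWeight, show N - k ≠ 0 by omega]

lemma compositionWeight_le {N ℓ : ℕ} (hℓ : 1 ≤ ℓ) (hN : ℓ ≤ N) :
    compositionWeight N ℓ ≤ 9 ^ (ℓ - 1) * centralDescFactorial (N - ℓ + 1) := by
  induction ℓ, hℓ using Nat.le_induction generalizing N with
  | base => simp [compositionWeight_one hN, show N - 1 + 1 = N by omega]
  | succ ℓ hℓ ih =>
    have hsupp : compositionWeight N (ℓ + 1)
        = ∑ k ∈ Icc 1 (N - ℓ), centralDescFactorial k * compositionWeight (N - k) ℓ := by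
      refine (sum_subset (Icc_subset_Icc le_rfl (by omega)) fun k hk hk' => ?_).symm
      simp only [mem_Icc] at hk hk'
      rw [compositionWeight_eq_zero_of_lt (by omega), mul_zero]
    set S := N - ℓ + 1
    calc compositionWeight N (ℓ + 1)
        ≤ ∑ k ∈ Icc 1 (S - 1), centralDescFactorial k *
            (9 ^ (ℓ - 1) * centralDescFactorial (S - k)) := by
          rw [hsupp, show S - 1 = N - ℓ by omega]
          refine sum_le_sum fun k hk => ?_
          rw [mem_Icc] at hk
          rw [show S - k = N - k - ℓ + 1 by omega]
          exact Nat.mul_le_mul_left _ (ih (by omega))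
      _ = 9 ^ (ℓ - 1) *
            ∑ k ∈ Icc 1 (S - 1), centralDescFactorial k * centralDescFactorial (S - k) := by
          rw [mul_sum]; exact sum_congr rfl fun _ _ => by ring
      _ ≤ 9 ^ (ℓ - 1) * (9 * centralDescFactorial (S - 1)) :=
          Nat.mul_le_mul_left _ (sum_centralDescFactorial_mul_le S)
      _ = 9 ^ (ℓ + 1 - 1) * centralDescFactorial (N - (ℓ + 1) + 1) := by
          rw [show S - 1 = N - (ℓ + 1) + 1 by omega, show ℓ + 1 - 1 = ℓ - 1 + 1 by omega,
            pow_succ]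
          ring

lemma sum_powerset_filter_ne_empty_apply_card {α : Type*} [DecidableEq α] (S : Finset α)
    (g : ℕ → ℕ) :
    ∑ t ∈ S.powerset.filter (· ≠ ∅), g t.card = ∑ k ∈ Icc 1 S.card, S.card.choose k * g k := by
  have hIcc : Icc 1 S.card = (range (S.card + 1)).filter (· ≠ 0) := by
    ext k; simp only [mem_Icc, mem_filter, mem_range]; omega
  rw [sum_filter, hIcc, sum_filter]
  simp_rw [ne_eq, ← Finset.card_eq_zero (s := (_ : Finset α))]
  rw [sum_powerset_apply_card (fun k => if ¬k = 0 then g k else 0)]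
  simp only [smul_eq_mul, mul_ite, mul_zero]

section PartitionWeight

variable {ι : Type*} [Fintype ι] [DecidableEq ι]

noncomputable def partitionsOfCard (S : Finset ι) (ℓ : ℕ) : Finset (Finset (Finset ι)) :=
  univ.filter fun P => IsSetPartitionOn S P ∧ P.card = ℓ

noncomputable def partitionWeight (S : Finset ι) (ℓ : ℕ) : ℕ :=
  ∑ P ∈ partitionsOfCard S ℓ, ∏ s ∈ P, (2 * s.card)!

lemma mem_partitionsOfCard {S : Finset ι} {ℓ : ℕ} {P : Finset (Finset ι)} :
    P ∈ partitionsOfCard S ℓ ↔ IsSetPartitionOn S P ∧ P.card = ℓ := by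
  simp [partitionsOfCard]

lemma succ_mul_partitionWeight_succ_le (S : Finset ι) (ℓ : ℕ) :
    (ℓ + 1) * partitionWeight S (ℓ + 1) ≤
      ∑ t ∈ S.powerset.filter (· ≠ ∅), (2 * t.card)! * partitionWeight (S \ t) ℓ := by
  have hL : (ℓ + 1) * partitionWeight S (ℓ + 1) = ∑ P ∈ partitionsOfCard S (ℓ + 1),
      ∑ t ∈ P, (2 * t.card)! * ∏ s ∈ P.erase t, (2 * s.card)! := by
    rw [partitionWeight, mul_sum]
    refine sum_congr rfl fun P hP => ?_
    rw [← (mem_partitionsOfCard.1 hP).2, ← smul_eq_mul, ← sum_const]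
    exact sum_congr rfl fun t ht => (mul_prod_erase P (fun s => (2 * s.card)!) ht).symm
  rw [hL, sum_comm' (t' := S.powerset.filter (· ≠ ∅))
    (s' := fun t => (partitionsOfCard S (ℓ + 1)).filter (t ∈ ·))]
  · refine sum_le_sum fun t _ => ?_
    have hinj : Set.InjOn (fun P : Finset (Finset ι) => P.erase t)
        ↑((partitionsOfCard S (ℓ + 1)).filter (t ∈ ·)) := by
      intro P hP P' hP' h
      rw [← insert_erase (mem_filter.1 hP).2, ← insert_erase (mem_filter.1 hP').2]
      exact congrArg (insert t) h
    rw [partitionWeight, mul_sum,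
      ← sum_image (f := fun Q => (2 * t.card)! * ∏ s ∈ Q, (2 * s.card)!) hinj]
    refine sum_le_sum_of_subset fun Q hQ => ?_
    obtain ⟨P, hP, rfl⟩ := mem_image.1 hQ
    obtain ⟨hP, htP⟩ := mem_filter.1 hP
    obtain ⟨hpart, hcard⟩ := mem_partitionsOfCard.1 hP
    exact mem_partitionsOfCard.2 ⟨hpart.erase htP, by rw [card_erase_of_mem htP, hcard]; rfl⟩
  · intro P t
    simp only [mem_filter, mem_powerset]
    constructor
    · rintro ⟨hP, htP⟩
      have hpart := (mem_partitionsOfCard.1 hP).1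
      exact ⟨⟨hP, htP⟩, hpart.1 t htP⟩
    · rintro ⟨h, -⟩
      exact h

lemma partitionWeight_zero_le (S : Finset ι) :
    partitionWeight S 0 ≤ S.card ! * compositionWeight S.card 0 := by
  rcases S.eq_empty_or_nonempty with rfl | ⟨x, hx⟩
  · have hsub : partitionsOfCard (∅ : Finset ι) 0 ⊆ {∅} := fun P hP =>
      mem_singleton.2 (Finset.card_eq_zero.1 (mem_partitionsOfCard.1 hP).2)
    simpa [partitionWeight, compositionWeight] using
      sum_le_sum_of_subset (f := fun P => ∏ s ∈ P, (2 * s.card)!) hsub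
  · have hempty : partitionsOfCard S 0 = ∅ := eq_empty_of_forall_notMem fun P hP => by
      obtain ⟨hpart, hcard⟩ := mem_partitionsOfCard.1 hP
      obtain ⟨s, hs, -⟩ := hpart.2 x hx
      exact notMem_empty s (Finset.card_eq_zero.1 hcard ▸ hs.1)
    simp [partitionWeight, hempty]

lemma partitionWeight_mul_factorial_le (ℓ : ℕ) (S : Finset ι) :
    partitionWeight S ℓ * ℓ ! ≤ S.card ! * compositionWeight S.card ℓ := by
  induction ℓ generalizing S with
  | zero => simpa using partitionWeight_zero_le S
  | succ ℓ ih =>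
    set N := S.card
    have hterm : ∀ t ∈ S.powerset.filter (· ≠ ∅),
        (2 * t.card)! * (partitionWeight (S \ t) ℓ * ℓ !)
          ≤ (2 * t.card)! * ((N - t.card)! * compositionWeight (N - t.card) ℓ) := by
      intro t ht
      rw [← card_sdiff_of_subset (mem_powerset.1 (mem_filter.1 ht).1)]
      exact Nat.mul_le_mul_left _ (ih _)
    calc partitionWeight S (ℓ + 1) * (ℓ + 1)! = (ℓ + 1) * partitionWeight S (ℓ + 1) * ℓ ! := by
          rw [Nat.factorial_succ]; ring
      _ ≤ (∑ t ∈ S.powerset.filter (· ≠ ∅), (2 * t.card)! * partitionWeight (S \ t) ℓ) * ℓ ! :=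
          Nat.mul_le_mul_right _ (succ_mul_partitionWeight_succ_le S ℓ)
      _ ≤ ∑ t ∈ S.powerset.filter (· ≠ ∅),
            (2 * t.card)! * ((N - t.card)! * compositionWeight (N - t.card) ℓ) := by
          rw [sum_mul]
          exact sum_le_sum fun t ht => (mul_assoc _ _ _).le.trans (hterm t ht)
      _ = ∑ k ∈ Icc 1 N, N ! * (centralDescFactorial k * compositionWeight (N - k) ℓ) := by
          refine (sum_powerset_filter_ne_empty_apply_card S
            (fun k => (2 * k)! * ((N - k)! * compositionWeight (N - k) ℓ))).trans
            (sum_congr rfl fun k hk => ?_)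
          rw [← Nat.choose_mul_factorial_mul_factorial (mem_Icc.1 hk).2,
            ← centralDescFactorial_mul_factorial]
          ring
      _ = N ! * compositionWeight N (ℓ + 1) := by rw [← mul_sum]; rfl

end PartitionWeight

lemma pow_le_prod_Ico_one_nineteen :
    297 ^ 18 ≤ 2 ^ 23 * ∏ j ∈ Ico 1 19, (16 * j + 8) := by
  decide

-- `297 = 33 * 9` and `16 * j + 8 = 4 * (4 * j + 2)` are the per-block growth rates of the target
-- bound and of `centralDescFactorial`; only the factors with `j < 19` fall short of `297`.
lemma pow_card_le_prod_of_one_le {J : Finset ℕ} (hJ : ∀ j ∈ J, 1 ≤ j) :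
    297 ^ J.card ≤ 2 ^ 23 * ∏ j ∈ J, (16 * j + 8) := by
  set J₁ := J.filter (· < 19)
  set J₂ := J.filter (¬ · < 19)
  have hlarge : 297 ^ J₂.card ≤ ∏ j ∈ J₂, (16 * j + 8) :=
    Finset.pow_card_le_prod _ _ _ fun j hj => by simp only [J₂, mem_filter] at hj; omega
  have hJ₁ : J₁ ⊆ Ico 1 19 := fun j hj => by
    simp only [J₁, mem_filter] at hj; exact mem_Ico.2 ⟨hJ j hj.1, hj.2⟩
  have hrest : ∏ j ∈ Ico 1 19 \ J₁, (16 * j + 8) ≤ 297 ^ (Ico 1 19 \ J₁).card :=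
    Finset.prod_le_pow_card _ _ _ fun j hj => by simp only [mem_sdiff, mem_Ico] at hj; omega
  have hsmall : 297 ^ J₁.card ≤ 2 ^ 23 * ∏ j ∈ J₁, (16 * j + 8) := by
    refine Nat.le_of_mul_le_mul_right ?_ (prod_pos fun j _ => by omega :
      0 < ∏ j ∈ Ico 1 19 \ J₁, (16 * j + 8))
    calc 297 ^ J₁.card * ∏ j ∈ Ico 1 19 \ J₁, (16 * j + 8)
        ≤ 297 ^ J₁.card * 297 ^ (Ico 1 19 \ J₁).card := Nat.mul_le_mul_left _ hrest
      _ = 297 ^ 18 := by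
          rw [← pow_add, card_sdiff_of_subset hJ₁, Nat.card_Ico, Nat.add_sub_cancel']
          simpa using card_le_card hJ₁
      _ ≤ 2 ^ 23 * ∏ j ∈ Ico 1 19, (16 * j + 8) := pow_le_prod_Ico_one_nineteen
      _ = _ := by rw [← prod_sdiff hJ₁]; ring
  calc 297 ^ J.card = 297 ^ J₁.card * 297 ^ J₂.card := by
        rw [← pow_add, card_filter_add_card_filter_not]
    _ ≤ (2 ^ 23 * ∏ j ∈ J₁, (16 * j + 8)) * ∏ j ∈ J₂, (16 * j + 8) :=
        Nat.mul_le_mul hsmall hlarge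
    _ = _ := by rw [mul_assoc, prod_filter_mul_prod_filter_not]

lemma mul_pow_le_prod_Ico {ℓ n : ℕ} (hℓ : 2 ≤ ℓ) (hn : ℓ ≤ n) :
    66 * n * 297 ^ (ℓ - 1) ≤ 2 ^ 34 * ∏ j ∈ Ico (n - ℓ + 1) n, (16 * j + 8) := by
  have hJ := pow_card_le_prod_of_one_le (J := Ico (n - ℓ + 1) (n - 1))
    fun j hj => by rw [mem_Ico] at hj; omega
  rw [Nat.card_Ico, show n - 1 - (n - ℓ + 1) = ℓ - 2 by omega] at hJ
  have hlast : 66 * n * 297 ≤ 2 ^ 11 * (16 * (n - 1) + 8) := by omega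
  calc 66 * n * 297 ^ (ℓ - 1) = 66 * n * 297 * 297 ^ (ℓ - 2) := by
        rw [show ℓ - 1 = ℓ - 2 + 1 by omega, pow_succ]; ring
    _ ≤ 2 ^ 11 * (16 * (n - 1) + 8) * (2 ^ 23 * ∏ j ∈ Ico (n - ℓ + 1) (n - 1), (16 * j + 8)) :=
        Nat.mul_le_mul hlast hJ
    _ = _ := by
        rw [show Ico (n - ℓ + 1) n = Ico (n - ℓ + 1) (n - 1 + 1) by congr 1; omega,
          prod_Ico_succ_top (by omega)]
        ring

lemma pow_mul_factorial_mul_centralDescFactorial_le {ℓ n : ℕ} (hℓ : 2 ≤ ℓ) (hn : ℓ ≤ n) :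
    33 ^ ℓ * 9 ^ (ℓ - 1) * (n ! * centralDescFactorial (n - ℓ + 1))
      ≤ 2 ^ 32 * 4 ^ ℓ * (2 * n - 1)! := by
  set r := n - ℓ + 1
  have hprod : ∏ j ∈ Ico r n, (16 * j + 8) = 4 ^ (ℓ - 1) * ∏ j ∈ Ico r n, (4 * j + 2) := by
    rw [show ℓ - 1 = (Ico r n).card by rw [Nat.card_Ico]; omega, ← prod_const, ← prod_mul_distrib]
    exact prod_congr rfl fun j _ => by ring
  have hfac :
      (2 * n - 1)! * (2 * n) = n ! * centralDescFactorial r * ∏ j ∈ Ico r n, (4 * j + 2) := by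
    rw [mul_assoc, ← centralDescFactorial_eq_mul_prod (by omega), mul_comm (n !),
      centralDescFactorial_mul_factorial, mul_comm]
    exact Nat.mul_factorial_pred (by omega)
  have hpow : 33 ^ ℓ * 9 ^ (ℓ - 1) = 33 * 297 ^ (ℓ - 1) := by
    rw [show ℓ = ℓ - 1 + 1 by omega, pow_succ, Nat.add_sub_cancel, show 297 = 33 * 9 by rfl,
      mul_pow]
    ring
  refine Nat.le_of_mul_le_mul_right ?_ (show 0 < 2 * n by omega)
  calc 33 ^ ℓ * 9 ^ (ℓ - 1) * (n ! * centralDescFactorial r) * (2 * n)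
      = (66 * n * 297 ^ (ℓ - 1)) * (n ! * centralDescFactorial r) := by rw [hpow]; ring
    _ ≤ (2 ^ 34 * ∏ j ∈ Ico r n, (16 * j + 8)) * (n ! * centralDescFactorial r) :=
        Nat.mul_le_mul_right _ (mul_pow_le_prod_Ico hℓ hn)
    _ = 2 ^ 32 * 4 ^ ℓ * ((2 * n - 1)! * (2 * n)) := by
        rw [hprod, hfac, show 4 ^ ℓ = 4 * 4 ^ (ℓ - 1) by rw [← _root_.pow_succ']; congr 1; omega]
        ring
    _ = _ := by ring

lemma factorial_add_mul_factorial_le {a b : ℕ} (h : a ≤ b) (d : ℕ) :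
    (a + d)! * b ! ≤ (b + d)! * a ! := by
  induction d with
  | zero => rw [add_zero, add_zero, mul_comm]
  | succ d ih =>
    rw [← add_assoc, ← add_assoc, Nat.factorial_succ, Nat.factorial_succ, mul_assoc, mul_assoc]
    exact Nat.mul_le_mul (by omega) ih

lemma prod_factorial_mul_factorial_le {α : Type*} [DecidableEq α] {s : Finset α}
    {f g : α → ℕ} {c : ℕ} (hc : ∀ x ∈ s, c ≤ g x) (hgf : ∀ x ∈ s, g x ≤ f x) :
    (∏ x ∈ s, (f x)!) * (∑ x ∈ s, g x - c * (s.card - 1))!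
      ≤ (∑ x ∈ s, f x - c * (s.card - 1))! * ∏ x ∈ s, (g x)! := by
  obtain ⟨t, hsum⟩ : ∃ t, ∑ x ∈ s, f x = ∑ x ∈ s, g x + t :=
    ⟨_, (Nat.add_sub_of_le (sum_le_sum hgf)).symm⟩
  induction t generalizing f with
  | zero =>
    have hfg := (sum_eq_sum_iff_of_le hgf).1 hsum.symm
    rw [prod_congr rfl fun x hx => by rw [← hfg x hx], sum_congr rfl hfg, mul_comm]
  | succ t ih =>
    obtain ⟨x₀, hx₀, hlt⟩ : ∃ x₀ ∈ s, g x₀ < f x₀ := by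
      by_contra! h
      have := sum_le_sum h
      omega
    set f' := Function.update f x₀ (f x₀ - 1)
    have hf'x₀ : f' x₀ = f x₀ - 1 := Function.update_self ..
    have hgf' : ∀ x ∈ s, g x ≤ f' x := fun x hx => by
      rcases eq_or_ne x x₀ with rfl | hne
      · rw [hf'x₀]; omega
      · rw [show f' x = f x from Function.update_of_ne hne _ _]; exact hgf x hx
    have hsum' : ∑ x ∈ s, f' x + 1 = ∑ x ∈ s, f x := by
      rw [sum_update_of_mem hx₀, ← add_sum_erase s f hx₀, sdiff_singleton_eq_erase]
      omega
    have hprod : ∏ x ∈ s, (f x)! = f x₀ * ∏ x ∈ s, (f' x)! := by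
      simp_rw [f', Function.apply_update (fun _ => Nat.factorial)]
      rw [prod_update_of_mem hx₀, ← mul_prod_erase s (fun x => (f x)!) hx₀,
        sdiff_singleton_eq_erase, ← mul_assoc, Nat.mul_factorial_pred (by omega)]
    have hothers : c * (s.card - 1) ≤ ∑ x ∈ s.erase x₀, f x := by
      rw [← card_erase_of_mem hx₀, mul_comm, ← smul_eq_mul]
      exact card_nsmul_le_sum _ _ _ fun x hx =>
        (hc x (mem_of_mem_erase hx)).trans (hgf x (mem_of_mem_erase hx))
    have hfx₀ : f x₀ ≤ ∑ x ∈ s, f x - c * (s.card - 1) := by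
      rw [← add_sum_erase s f hx₀]; omega
    calc (∏ x ∈ s, (f x)!) * (∑ x ∈ s, g x - c * (s.card - 1))!
        = f x₀ * ((∏ x ∈ s, (f' x)!) * (∑ x ∈ s, g x - c * (s.card - 1))!) := by
          rw [hprod, mul_assoc]
      _ ≤ (∑ x ∈ s, f x - c * (s.card - 1)) *
            ((∑ x ∈ s, f x - c * (s.card - 1) - 1)! * ∏ x ∈ s, (g x)!) := by
          refine Nat.mul_le_mul hfx₀ ?_
          rw [show ∑ x ∈ s, f x - c * (s.card - 1) - 1 = ∑ x ∈ s, f' x - c * (s.card - 1) by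
            omega]
          exact ih hgf' (by omega)
      _ = _ := by rw [← mul_assoc, Nat.mul_factorial_pred (by omega)]

section Assembly

variable {ι : Type*} [Fintype ι] [DecidableEq ι]

lemma partitionWeight_mul_le {S : Finset ι} {ℓ : ℕ} (hℓ : 2 ≤ ℓ) (hℓS : ℓ ≤ S.card) :
    partitionWeight S ℓ * ℓ ! * 33 ^ ℓ ≤ 2 ^ 32 * 4 ^ ℓ * (2 * S.card - 1)! := by
  calc partitionWeight S ℓ * ℓ ! * 33 ^ ℓ
      ≤ S.card ! * compositionWeight S.card ℓ * 33 ^ ℓ :=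
        Nat.mul_le_mul_right _ (partitionWeight_mul_factorial_le ℓ S)
    _ ≤ S.card ! * (9 ^ (ℓ - 1) * centralDescFactorial (S.card - ℓ + 1)) * 33 ^ ℓ :=
        Nat.mul_le_mul_right _ (Nat.mul_le_mul_left _ (compositionWeight_le (by omega) hℓS))
    _ = 33 ^ ℓ * 9 ^ (ℓ - 1) * (S.card ! * centralDescFactorial (S.card - ℓ + 1)) := by ring
    _ ≤ _ := pow_mul_factorial_mul_centralDescFactorial_le hℓ hℓS

lemma sum_prod_factorial_mul_factorial_le {S : Finset ι} {v : ι → ℕ} (hv : ∀ x ∈ S, 2 ≤ v x)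
    (ℓ : ℕ) :
    (∑ P ∈ partitionsOfCard S ℓ, ∏ s ∈ P, (∑ x ∈ s, v x)!) * (2 * S.card - 2 * (ℓ - 1))!
      ≤ (∑ x ∈ S, v x - 2 * (ℓ - 1))! * partitionWeight S ℓ := by
  rw [partitionWeight, sum_mul, mul_sum]
  refine sum_le_sum fun P hP => ?_
  obtain ⟨hpart, hcard⟩ := mem_partitionsOfCard.1 hP
  have h := prod_factorial_mul_factorial_le (s := P) (f := fun s => ∑ x ∈ s, v x)
    (g := fun s => 2 * s.card) (c := 2) (fun s hs => by have := hpart.card_pos_of_mem hs; omega)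
    fun s hs => by
      rw [mul_comm, ← smul_eq_mul]
      exact card_nsmul_le_sum _ _ _ fun x hx => hv x ((hpart.1 s hs).1 hx)
  rwa [← mul_sum, hpart.sum_card_eq, hpart.sum_sum_eq, hcard] at h

lemma sum_prod_factorial_mul_le {S : Finset ι} {v : ι → ℕ} (hv : ∀ x ∈ S, 2 ≤ v x) {ℓ : ℕ}
    (hℓ : 2 ≤ ℓ) (hℓS : ℓ ≤ S.card) :
    (∑ P ∈ partitionsOfCard S ℓ, ∏ s ∈ P, (∑ x ∈ s, v x)!) * ℓ ! * 33 ^ ℓ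
      ≤ 2 ^ 32 * 4 ^ ℓ * (∑ x ∈ S, v x - 1)! := by
  set n := S.card
  set M := ∑ x ∈ S, v x
  have hM : 2 * n ≤ M := by
    rw [mul_comm, ← smul_eq_mul]; exact card_nsmul_le_sum _ _ _ hv
  have hshift := factorial_add_mul_factorial_le (show 2 * n - 2 * (ℓ - 1) ≤ 2 * n - 1 by omega)
    (M - 2 * n)
  rw [show 2 * n - 2 * (ℓ - 1) + (M - 2 * n) = M - 2 * (ℓ - 1) by omega,
    show 2 * n - 1 + (M - 2 * n) = M - 1 by omega] at hshift
  refine Nat.le_of_mul_le_mul_right ?_ (Nat.factorial_pos (2 * n - 2 * (ℓ - 1)))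
  calc (∑ P ∈ partitionsOfCard S ℓ, ∏ s ∈ P, (∑ x ∈ s, v x)!) * ℓ ! * 33 ^ ℓ
        * (2 * n - 2 * (ℓ - 1))!
      = (∑ P ∈ partitionsOfCard S ℓ, ∏ s ∈ P, (∑ x ∈ s, v x)!) * (2 * n - 2 * (ℓ - 1))!
          * (ℓ ! * 33 ^ ℓ) := by ring
    _ ≤ (M - 2 * (ℓ - 1))! * partitionWeight S ℓ * (ℓ ! * 33 ^ ℓ) :=
        Nat.mul_le_mul_right _ (sum_prod_factorial_mul_factorial_le hv ℓ)
    _ ≤ (M - 2 * (ℓ - 1))! * (2 ^ 32 * 4 ^ ℓ * (2 * n - 1)!) := by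
        rw [mul_assoc, ← mul_assoc (partitionWeight S ℓ)]
        exact Nat.mul_le_mul_left _ (partitionWeight_mul_le hℓ hℓS)
    _ = 2 ^ 32 * 4 ^ ℓ * ((M - 2 * (ℓ - 1))! * (2 * n - 1)!) := by ring
    _ ≤ 2 ^ 32 * 4 ^ ℓ * ((M - 1)! * (2 * n - 2 * (ℓ - 1))!) := Nat.mul_le_mul_left _ hshift
    _ = _ := by ring

lemma sum_partitionsOfCard_le {S : Finset ι} {v : ι → ℕ} (hv : ∀ x ∈ S, 2 ≤ v x) {ℓ : ℕ}
    (hℓ : 2 ≤ ℓ) (hℓS : ℓ ≤ S.card) :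
    ∑ P ∈ partitionsOfCard S ℓ,
        ((P.card - 2)! : ℝ) * (33 / 4) ^ P.card * ∏ s ∈ P, ((∑ x ∈ s, v x)! : ℝ)
      ≤ 2 ^ 32 * (∑ x ∈ S, v x - 1)! / (ℓ * (ℓ - 1)) := by
  have hnat : ((∑ P ∈ partitionsOfCard S ℓ, ∏ s ∈ P, (∑ x ∈ s, v x)! : ℕ) * ℓ ! * 33 ^ ℓ : ℝ)
      ≤ 2 ^ 32 * 4 ^ ℓ * (∑ x ∈ S, v x - 1)! := by
    exact_mod_cast sum_prod_factorial_mul_le hv hℓ hℓS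
  have hfac : (ℓ ! : ℝ) = ℓ * (ℓ - 1) * (ℓ - 2)! := by
    rw [← Nat.mul_factorial_pred (by omega), ← Nat.mul_factorial_pred (show ℓ - 1 ≠ 0 by omega),
      show ℓ - 1 - 1 = ℓ - 2 by omega]
    push_cast [Nat.cast_sub (by omega : 1 ≤ ℓ)]
    ring
  have hℓ' : (0 : ℝ) < ℓ * (ℓ - 1) := by
    have : (2 : ℝ) ≤ ℓ := by exact_mod_cast hℓ
    nlinarith
  rw [sum_congr rfl fun P hP => by rw [(mem_partitionsOfCard.1 hP).2], ← mul_sum,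
    le_div_iff₀ hℓ', div_pow]
  push_cast at hnat
  rw [hfac] at hnat
  have h4 : (0 : ℝ) < 4 ^ ℓ := by positivity
  calc _ = (∑ P ∈ partitionsOfCard S ℓ, ∏ s ∈ P, ((∑ x ∈ s, v x)! : ℝ)) *
        (ℓ * (ℓ - 1) * (ℓ - 2)!) * 33 ^ ℓ / 4 ^ ℓ := by field_simp
    _ ≤ 2 ^ 32 * 4 ^ ℓ * (∑ x ∈ S, v x - 1)! / 4 ^ ℓ := by gcongr
    _ = _ := by field_simp

lemma sum_partitions_eq_sum_Icc (S : Finset ι) (F : Finset (Finset ι) → ℝ) :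
    ∑ P ∈ univ.filter (fun P : Finset (Finset ι) => IsSetPartitionOn S P ∧ 2 ≤ P.card), F P
      = ∑ ℓ ∈ Icc 2 S.card, ∑ P ∈ partitionsOfCard S ℓ, F P := by
  rw [← sum_fiberwise_of_maps_to (g := card) fun P hP => by
    obtain ⟨hpart, h2⟩ := (mem_filter.1 hP).2
    exact mem_Icc.2 ⟨h2, hpart.card_le⟩]
  refine sum_congr rfl fun ℓ hℓ => sum_congr ?_ fun _ _ => rfl
  ext P
  simp only [mem_filter, mem_univ, true_and, mem_partitionsOfCard]
  constructor
  · rintro ⟨⟨hpart, -⟩, hcard⟩; exact ⟨hpart, hcard⟩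
  · rintro ⟨hpart, hcard⟩; exact ⟨⟨hpart, hcard ▸ (mem_Icc.1 hℓ).1⟩, hcard⟩

end Assembly

lemma sum_Icc_one_div_mul_sub_one_le (n : ℕ) :
    ∑ ℓ ∈ Icc 2 n, 1 / ((ℓ : ℝ) * (ℓ - 1)) ≤ 1 := by
  rcases Nat.eq_zero_or_pos n with rfl | hn
  · simp
  suffices ∑ ℓ ∈ Icc 2 n, 1 / ((ℓ : ℝ) * (ℓ - 1)) = 1 - 1 / n by
    rw [this]; linarith [show (0 : ℝ) ≤ 1 / n by positivity]
  induction n, hn using Nat.le_induction with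
  | base => simp
  | succ n hn ih =>
    have : (n : ℝ) ≠ 0 := by positivity
    rw [sum_Icc_succ_top (by omega), ih]
    push_cast
    rw [add_sub_cancel_right]
    field_simp
    ring

end EskinOkounkov

open EskinOkounkov

theorem abs_Emap_le_of_two_le_general (n : ℕ) (m : Fin n → ℕ) (hm : ∀ i, 2 ≤ m i) :
    |Emap Finset.univ m| ≤ 2 ^ 40 * (((∑ i, m i) - 1)! : ℝ) := by
  have hM : (0 : ℝ) ≤ ((∑ i, m i) - 1)! := by positivity
  calc |Emap univ m|
      ≤ ∑ ℓ ∈ Icc 2 n, ∑ P ∈ partitionsOfCard univ ℓ,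
          ((P.card - 2)! : ℝ) * (33 / 4) ^ P.card * ∏ s ∈ P, ((∑ x ∈ s, m x)! : ℝ) := by
        have h := abs_Emap_le_sum univ m
        rwa [sum_partitions_eq_sum_Icc, Finset.card_fin] at h
    _ ≤ ∑ ℓ ∈ Icc 2 n, 2 ^ 32 * ((∑ i, m i) - 1)! / ((ℓ : ℝ) * (ℓ - 1)) :=
        sum_le_sum fun ℓ hℓ => sum_partitionsOfCard_le (fun i _ => hm i) (mem_Icc.1 hℓ).1
          (by simpa using (mem_Icc.1 hℓ).2)
    _ = 2 ^ 32 * ((∑ i, m i) - 1)! * ∑ ℓ ∈ Icc 2 n, 1 / ((ℓ : ℝ) * (ℓ - 1)) := by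
        rw [mul_sum]; simp only [mul_one_div]
    _ ≤ 2 ^ 32 * ((∑ i, m i) - 1)! * 1 := by gcongr; exact sum_Icc_one_div_mul_sub_one_le n
    _ ≤ 2 ^ 40 * ((∑ i, m i) - 1)! := by nlinarith

/-- Let `n` be a positive integer and `m = (m₁, …, m_n)` an `n`-tuple
of integers with every `m_i ≥ 2`.  Then `|E(m)| ≤ 2^{40} · (|m| − 1)!`. -/
theorem abs_Emap_le_of_two_le (n : ℕ) (hn : 0 < n) (m : Fin n → ℕ) (hm : ∀ i, 2 ≤ m i) :
    |Emap Finset.univ m| ≤ 2 ^ 40 * (((∑ i, m i) - 1)! : ℝ) :=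
  abs_Emap_le_of_two_le_general n m hm
end
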